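/- arXiv:2108.11689 — 4 statements merged into one kernel-verified Lean document; each statement's English description precedes it below -/
import Mathlib

section
/- Let σ_s, σ_t be reflections as above with α_s(b_t)·α_t(b_s) > 4 (and both factors negative). Then the induced map of σ_sσ_t on V/(ker α_s ∩ ker α_t) is diagonalizable with two distinct positive real eigenvalues λ and λ⁻¹ for some λ > 1; in particular σ_sσ_t has infinite order. -/
set_option maxHeartbeats 1000000 in
/-- Let `σs = Id − αs ⊗ bs` and `σt = Id − αt ⊗ bt` be reflections with
`αs bs = αt bt = 2`, `αs bt < 0`, `αt bs < 0`, and `αs bt * αt bs > 4`.  Then the map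
induced by `σs ∘ σt` on the 2-dimensional quotient `V ⧸ (ker αs ⊓ ker αt)` is
diagonalizable with two distinct positive real eigenvalues `λ > 1` and `λ⁻¹`; in
particular it has infinite order. -/
theorem reflection_product_loxodromic (V : Type*) [AddCommGroup V] [Module ℝ V]
    (αs αt : V →ₗ[ℝ] ℝ) (bs bt : V)
    (hs : αs bs = 2) (ht : αt bt = 2)
    (hst : αs bt < 0) (hts : αt bs < 0)
    (hprod : 4 < αs bt * αt bs)
    (σs σt : V →ₗ[ℝ] V)
    (hσs : ∀ v, σs v = v - αs v • bs) (hσt : ∀ v, σt v = v - αt v • bt)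
    (U : Submodule ℝ V) (hU : U = LinearMap.ker αs ⊓ LinearMap.ker αt)
    (hdim : Module.finrank ℝ (V ⧸ U) = 2)
    (g : Module.End ℝ (V ⧸ U))
    (hg : ∀ v : V, g (Submodule.Quotient.mk v) = Submodule.Quotient.mk (σs (σt v))) :
    ∃ lam : ℝ, 1 < lam ∧
      (∃ v : V ⧸ U, v ≠ 0 ∧ g v = lam • v) ∧
      (∃ w : V ⧸ U, w ≠ 0 ∧ g w = lam⁻¹ • w) ∧
      ∀ k : ℕ, 0 < k → g ^ k ≠ 1 := by
  set a := αs bt with hadef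
  set c := αt bs with hcdef
  set T := a * c - 2 with hTdef
  have hT : 2 < T := by simp only [hTdef]; nlinarith
  have hT4 : 0 < T ^ 2 - 4 := by nlinarith
  set s := Real.sqrt (T ^ 2 - 4) with hsdef
  have hs2 : s ^ 2 = T ^ 2 - 4 := Real.sq_sqrt (le_of_lt hT4)
  have hspos : 0 < s := Real.sqrt_pos.mpr hT4
  set lam := (T + s) / 2 with hlamdef
  have hlam1 : 1 < lam := by rw [hlamdef]; linarith
  have hlampos : 0 < lam := by linarith
  have hmul : lam * ((T - s) / 2) = 1 := by
    rw [hlamdef]; nlinarith [hs2]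
  have hinv : lam⁻¹ = (T - s) / 2 := by
    field_simp
    nlinarith [hs2]
  have hquad : lam ^ 2 - T * lam + 1 = 0 := by
    rw [hlamdef]; nlinarith [hs2]
  have hquad' : lam⁻¹ ^ 2 - T * lam⁻¹ + 1 = 0 := by
    rw [hinv]; nlinarith [hs2]
  have key : ∀ μ : ℝ, μ ^ 2 - T * μ + 1 = 0 → 2 * μ + 2 - a * c ≠ 0 →
      ∃ v : V ⧸ U, v ≠ 0 ∧ g v = μ • v := by
    intro μ hq hne
    refine ⟨Submodule.Quotient.mk (a • bs + (μ + 1 - a * c) • bt), ?_, ?_⟩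
    · rw [Ne, Submodule.Quotient.mk_eq_zero, hU, Submodule.mem_inf]
      rintro ⟨-, h2⟩
      rw [LinearMap.mem_ker, map_add, map_smul, map_smul, ht, ← hcdef,
        smul_eq_mul, smul_eq_mul] at h2
      apply hne
      linarith
    · rw [hg]
      have hαtv : αt (a • bs + (μ + 1 - a * c) • bt) = a * c + 2 * (μ + 1 - a * c) := by
        rw [map_add, map_smul, map_smul, ht, ← hcdef, smul_eq_mul, smul_eq_mul]; ring
      have hσtv : σt (a • bs + (μ + 1 - a * c) • bt) =
          a • bs + (-(a * c) - (μ + 1 - a * c)) • bt := by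
        rw [hσt, hαtv]
        match_scalars <;> ring
      have hαsσtv : αs (a • bs + (-(a * c) - (μ + 1 - a * c)) • bt) =
          2 * a + (-(a * c) - (μ + 1 - a * c)) * a := by
        rw [map_add, map_smul, map_smul, hs, ← hadef, smul_eq_mul, smul_eq_mul]; ring
      have hv : σs (σt (a • bs + (μ + 1 - a * c) • bt)) =
          μ • (a • bs + (μ + 1 - a * c) • bt) := by
        rw [hσtv, hσs, hαsσtv]
        match_scalars
        · ring
        · linear_combination -hq - μ * hTdef
      rw [hv, ← Submodule.Quotient.mk_smul]
  obtain ⟨v, hv0, hvg⟩ := key lam hquad (by rw [hlamdef]; intro h; nlinarith)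
  obtain ⟨w, hw0, hwg⟩ := key lam⁻¹ hquad' (by rw [hinv]; intro h; nlinarith)
  refine ⟨lam, hlam1, ⟨v, hv0, hvg⟩, ⟨w, hw0, hwg⟩, ?_⟩
  intro k hk hgk
  have hpow : ∀ n : ℕ, (g ^ n) v = lam ^ n • v := by
    intro n
    induction n with
    | zero => simp
    | succ n ih =>
      rw [pow_succ, Module.End.mul_apply, hvg, map_smul, ih, smul_smul, ← pow_succ']
  have h1 : v = lam ^ k • v := by
    have := hpow k
    rw [hgk] at this
    simpa using this
  have hlk : 1 < lam ^ k := one_lt_pow₀ hlam1 (by omega)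
  have : (lam ^ k - 1) • v = 0 := by
    rw [sub_smul, one_smul, ← h1, sub_self]
  rcases smul_eq_zero.mp this with h | h
  · exact absurd h (by intro hh; nlinarith)
  · exact hv0 h
end

section
/- Let F be a finite forest (acyclic graph) in which every vertex has degree at most 3. Call a function from the edge set of F to {+,−} balanced if no vertex of degree 3 has all three incident edges of the same sign. If F is a tree with n₂ vertices of degree 2 (among vertices of positive degree), n₃ vertices of degree 3, and at least one edge, then the number of balanced sign functions of F equals 2^{n₂+1}·3^{n₃}. -/
open Finset SimpleGraph

private lemma exists_leaf {V : Type*} [Fintype V] [DecidableEq V] (F : SimpleGraph V)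
    [DecidableRel F.Adj] (hac : F.IsAcyclic) (hne : F.edgeSet.Nonempty) :
    ∃ v, F.degree v = 1 := by
  obtain ⟨e, he⟩ := hne
  induction e using Sym2.ind with
  | _ a b =>
  have hab : F.Adj a b := F.mem_edgeSet.mp he
  set S : Set ℕ := {n | ∃ (x y : V) (p : F.Walk x y), p.IsPath ∧ p.length = n} with hS
  have h1S : 1 ∈ S := ⟨a, b, Walk.cons hab Walk.nil, by simp [hab.ne], by simp⟩
  have hbdd : BddAbove S := by
    refine ⟨Fintype.card V, ?_⟩
    rintro n ⟨x, y, p, hp, rfl⟩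
    exact hp.length_lt.le
  obtain ⟨x, y, p, hp, hlen⟩ := Nat.sSup_mem ⟨1, h1S⟩ hbdd
  have hmax : ∀ k ∈ S, k ≤ sSup S := fun k hk => le_csSup hbdd hk
  have h1le : 1 ≤ sSup S := hmax 1 h1S
  have hnotnil : ¬ p.reverse.Nil := by
    rw [Walk.nil_iff_length_eq, Walk.length_reverse]; omega
  obtain ⟨z, hyz, q, hq⟩ := Walk.not_nil_iff.mp hnotnil
  have hrev : p.reverse.IsPath := hp.reverse
  rw [hq, Walk.cons_isPath_iff] at hrev
  obtain ⟨hqpath, hynotq⟩ := hrev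
  have hkey : ∀ w, F.Adj y w → w = z := by
    intro w hw
    by_contra hwz
    by_cases hws : w ∈ p.reverse.support
    · have hwq : w ∈ q.support := by
        rw [hq, Walk.support_cons] at hws
        rcases List.mem_cons.mp hws with h | h
        · exact absurd h hw.ne'
        · exact h
      have hr := hqpath.takeUntil hwq
      have hyr : y ∉ (q.takeUntil w hwq).support :=
        fun hy => hynotq (Walk.support_takeUntil_subset _ hwq hy)
      have hcyc : (Walk.cons hw.symm (Walk.cons hyz (q.takeUntil w hwq))).IsCycle := by
        rw [Walk.cons_isCycle_iff]
        refine ⟨by rw [Walk.cons_isPath_iff]; exact ⟨hr, hyr⟩, ?_⟩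
        simp only [Walk.edges_cons, List.mem_cons]
        rintro (h | h)
        · rw [Sym2.eq_iff] at h
          rcases h with ⟨h1, h2⟩ | ⟨h1, h2⟩
          · exact hw.ne' h1
          · exact hwz h1
        · exact hyr ((q.takeUntil w hwq).snd_mem_support_of_mem_edges h)
      exact hac _ hcyc
    · have hp1 : (Walk.cons hw.symm p.reverse).IsPath := by
        rw [Walk.cons_isPath_iff]; exact ⟨hp.reverse, hws⟩
      have hmem : p.length + 1 ∈ S := ⟨w, x, _, hp1, by simp⟩
      have := hmax _ hmem
      omega
  have hnb : F.neighborFinset y = {z} := by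
    ext w
    simp only [mem_neighborFinset, Finset.mem_singleton]
    exact ⟨hkey w, fun h => h ▸ hyz⟩
  exact ⟨y, by rw [← card_neighborFinset_eq_degree, hnb, Finset.card_singleton]⟩
open Finset SimpleGraph

private abbrev Bal {V : Type*} [Fintype V] [DecidableEq V] (F : SimpleGraph V)
    [DecidableRel F.Adj] (σ : F.edgeSet → Bool) : Prop :=
  ∀ v, F.degree v = 3 →
    ∃ e₁ e₂ : F.edgeSet, v ∈ (e₁ : Sym2 V) ∧ v ∈ (e₂ : Sym2 V) ∧ σ e₁ ≠ σ e₂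

private lemma ncard_setOf {V : Type*} [Fintype V] (P : V → Prop) [DecidablePred P] :
    {v | P v}.ncard = #(univ.filter P) := by
  rw [Set.ncard_eq_toFinset_card', Set.toFinset_setOf]

private lemma bool_count (P : Prop) [Decidable P] (a b : Bool) :
    ((if P ∧ ¬(true = a ∧ true = b) then 1 else 0)
        + if P ∧ ¬(false = a ∧ false = b) then 1 else 0)
      = ((if P ∧ a = b then 1 else 0) + 2 * if P ∧ ¬ a = b then 1 else 0 : ℕ) := by
  by_cases hP : P <;> cases a <;> cases b <;> simp [hP]

private lemma count_aux {V : Type*} [Fintype V] [DecidableEq V] :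
    ∀ (m : ℕ) (F : SimpleGraph V) [DecidableRel F.Adj],
      F.edgeSet.ncard = m → F.IsAcyclic → (∀ v, F.degree v ≤ 3) →
      Nat.card {σ : F.edgeSet → Bool // Bal F σ} *
          2 ^ (F.edgeSet.ncard + {v | F.degree v = 0}.ncard)
        = 2 ^ ({v | F.degree v = 2}.ncard + Fintype.card V) *
            3 ^ {v | F.degree v = 3}.ncard := by
  intro m
  induction m using Nat.strong_induction_on with
  | _ m ih =>
  intro F instF hm hac hdeg
  classical
  rcases eq_or_ne m 0 with rfl | hm0
  · -- base case : no edges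
    have hE : F.edgeSet = ∅ := by
      rw [← Set.ncard_eq_zero F.edgeSet.toFinite]; exact hm
    have hAdj : ∀ a c, ¬ F.Adj a c := by
      intro a c h
      have := F.mem_edgeSet.mpr h
      rw [hE] at this
      exact this
    have hdeg0 : ∀ w, F.degree w = 0 := by
      intro w
      rw [← F.card_neighborFinset_eq_degree w, Finset.card_eq_zero]
      ext c; simp [mem_neighborFinset, hAdj]
    haveI : IsEmpty F.edgeSet := Set.isEmpty_coe_sort.mpr hE
    have hcard1 : Nat.card {σ : F.edgeSet → Bool // Bal F σ} = 1 := by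
      rw [Nat.card_eq_one_iff_unique]
      refine ⟨⟨fun σ τ => Subtype.ext (Subsingleton.elim _ _)⟩,
        ⟨⟨fun g => true, fun w hw => by rw [hdeg0 w] at hw; exact absurd hw (by norm_num)⟩⟩⟩
    rw [hcard1, hm, ncard_setOf, ncard_setOf, ncard_setOf]
    have h0 : (univ.filter fun w => F.degree w = 0) = univ := by
      ext w; simp [hdeg0]
    have h2 : (univ.filter fun w => F.degree w = 2) = ∅ := by
      ext w; simp [hdeg0]
    have h3 : (univ.filter fun w => F.degree w = 3) = ∅ := by
      ext w; simp [hdeg0]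
    rw [h0, h2, h3]
    simp
  · -- inductive step
    have hne : F.edgeSet.Nonempty := Set.nonempty_of_ncard_ne_zero (by rw [hm]; exact hm0)
    obtain ⟨v, hv1⟩ := exists_leaf F hac hne
    obtain ⟨u, hu⟩ := Finset.card_eq_one.mp
      (by rw [F.card_neighborFinset_eq_degree v]; exact hv1)
    have huv : F.Adj v u := by
      have : u ∈ F.neighborFinset v := by rw [hu]; exact Finset.mem_singleton_self u
      exact (F.mem_neighborFinset v u).mp this
    have hune : u ≠ v := huv.ne'
    set e : Sym2 V := s(u, v) with hedef
    have he : e ∈ F.edgeSet := F.mem_edgeSet.mpr huv.symm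
    set F' : SimpleGraph V := F.deleteEdges {e} with hF'def
    haveI instF' : DecidableRel F'.Adj := fun a c =>
      decidable_of_iff (F.Adj a c ∧ ¬ s(a, c) = e) (by
        rw [hF'def, SimpleGraph.deleteEdges_adj, Set.mem_singleton_iff])
    have hAdj' : ∀ a c, F'.Adj a c ↔ F.Adj a c ∧ s(a, c) ≠ e := by
      intro a c
      rw [hF'def, SimpleGraph.deleteEdges_adj, Set.mem_singleton_iff]
    have hE' : F'.edgeSet = F.edgeSet \ {e} := by
      rw [hF'def, edgeSet_deleteEdges]
    have hsub : F'.edgeSet ⊆ F.edgeSet := by rw [hE']; exact Set.diff_subset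
    have hm' : F'.edgeSet.ncard + 1 = m := by
      rw [hE', Set.ncard_diff_singleton_add_one he F.edgeSet.toFinite]
      exact hm
    have hac' : F'.IsAcyclic := by
      intro w c hc
      exact hac _ (hc.transfer (fun g hg => hsub (c.edges_subset_edgeSet hg)))
    have hdeg' : ∀ w, F'.degree w ≤ 3 := by
      intro w
      refine le_trans ?_ (hdeg w)
      rw [← F'.card_neighborFinset_eq_degree w, ← F.card_neighborFinset_eq_degree w]
      refine Finset.card_le_card ?_
      intro c hc
      rw [mem_neighborFinset] at hc ⊢
      exact ((hAdj' w c).mp hc).1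
    -- neighbor finsets
    have hNv' : F'.neighborFinset v = ∅ := by
      ext w
      simp only [mem_neighborFinset, hAdj', Finset.notMem_empty, iff_false]
      rintro ⟨h1, h2⟩
      have : w ∈ F.neighborFinset v := (F.mem_neighborFinset v w).mpr h1
      rw [hu, Finset.mem_singleton] at this
      subst this
      exact h2 (Sym2.eq_swap)
    have hNu' : F'.neighborFinset u = (F.neighborFinset u).erase v := by
      ext w
      simp only [mem_neighborFinset, hAdj', Finset.mem_erase]
      constructor
      · rintro ⟨h1, h2⟩
        refine ⟨fun hwv => h2 ?_, h1⟩
        rw [hwv]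
      · rintro ⟨h1, h2⟩
        refine ⟨h2, fun hc => h1 ?_⟩
        rw [hedef] at hc
        exact (Sym2.congr_right.mp hc)
    have hNw' : ∀ w, w ≠ u → w ≠ v → F'.neighborFinset w = F.neighborFinset w := by
      intro w hwu hwv
      ext c
      simp only [mem_neighborFinset, hAdj']
      constructor
      · exact fun h => h.1
      · intro h
        refine ⟨h, fun hc => ?_⟩
        rw [hedef, Sym2.eq_iff] at hc
        rcases hc with ⟨h1, _⟩ | ⟨h2, _⟩
        · exact hwu h1
        · exact hwv h2
    have hdv' : F'.degree v = 0 := by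
      rw [← F'.card_neighborFinset_eq_degree v, hNv', Finset.card_empty]
    have hvmemu : v ∈ F.neighborFinset u := (F.mem_neighborFinset u v).mpr huv.symm
    have hdu' : F'.degree u + 1 = F.degree u := by
      rw [← F'.card_neighborFinset_eq_degree u, ← F.card_neighborFinset_eq_degree u, hNu']
      exact Finset.card_erase_add_one hvmemu
    have hdw' : ∀ w, w ≠ u → w ≠ v → F'.degree w = F.degree w := by
      intro w h1 h2
      rw [← F'.card_neighborFinset_eq_degree w, ← F.card_neighborFinset_eq_degree w, hNw' w h1 h2]
    have hd1 : 1 ≤ F.degree u := by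
      rw [← F.card_neighborFinset_eq_degree u]
      exact Finset.card_pos.mpr ⟨v, hvmemu⟩
    have hd3 : F.degree u ≤ 3 := hdeg u
    -- shared machinery
    have hgne : ∀ g : F'.edgeSet, (g : Sym2 V) ≠ e := by
      intro g hg
      have h2 := (Set.ext_iff.mp hE' (g : Sym2 V)).mp g.2
      exact h2.2 (Set.mem_singleton_iff.mpr hg)
    let ι : F'.edgeSet → F.edgeSet := fun g => ⟨g.1, hsub g.2⟩
    let res : (F.edgeSet → Bool) → (F'.edgeSet → Bool) := fun σ g => σ (ι g)
    let e0 : F.edgeSet := ⟨e, he⟩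
    have hmem_ne : ∀ (w : V), w ≠ u → w ≠ v → ∀ g : F.edgeSet,
        w ∈ (g : Sym2 V) → (g : Sym2 V) ∈ F'.edgeSet := by
      intro w hwu hwv g hwg
      rw [hE']
      refine ⟨g.2, fun hge => ?_⟩
      rw [Set.mem_singleton_iff] at hge
      rw [hge, hedef, Sym2.mem_iff] at hwg
      rcases hwg with h | h
      exacts [hwu h, hwv h]
    let base : (F.edgeSet → Bool) ≃ (F'.edgeSet → Bool) × Bool :=
      { toFun := fun σ => (res σ, σ e0)
        invFun := fun p g =>
          if hg : (g : Sym2 V) = e then p.2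
          else p.1 ⟨g.1, (Set.ext_iff.mp hE' _).mpr ⟨g.2, by simp [hg]⟩⟩
        left_inv := by
          intro σ
          funext g
          by_cases hg : (g : Sym2 V) = e
          · simp only [dif_pos hg]
            exact congrArg σ (Subtype.ext hg.symm)
          · simp only [dif_neg hg]; rfl
        right_inv := by
          intro p
          have h1 : ∀ g : F'.edgeSet,
              (if hg : (g : Sym2 V) = e then p.2
               else p.1 ⟨(g : Sym2 V), (Set.ext_iff.mp hE' _).mpr ⟨hsub g.2, by simp [hg]⟩⟩) = p.1 g := by
            intro g
            rw [dif_neg (hgne g)]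
          refine Prod.ext (funext fun g => h1 g) ?_
          show (if hg : (e0 : Sym2 V) = e then p.2 else _) = p.2
          rw [dif_pos rfl] }
    have hlift : ∀ (σ : F.edgeSet → Bool) (w : V), w ≠ u → w ≠ v →
        F'.degree w = 3 → Bal F σ → ∃ g₁ g₂ : F'.edgeSet,
          w ∈ (g₁ : Sym2 V) ∧ w ∈ (g₂ : Sym2 V) ∧ res σ g₁ ≠ res σ g₂ := by
      intro σ w hwu hwv hw3 hB
      obtain ⟨e₁, e₂, h1, h2, hne12⟩ := hB w (by rw [← hdw' w hwu hwv]; exact hw3)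
      exact ⟨⟨e₁.1, hmem_ne w hwu hwv e₁ h1⟩, ⟨e₂.1, hmem_ne w hwu hwv e₂ h2⟩, h1, h2, hne12⟩
    have hdrop : ∀ (σ : F.edgeSet → Bool) (w : V), w ≠ u → w ≠ v → F.degree w = 3 →
        Bal F' (res σ) → ∃ e₁ e₂ : F.edgeSet,
          w ∈ (e₁ : Sym2 V) ∧ w ∈ (e₂ : Sym2 V) ∧ σ e₁ ≠ σ e₂ := by
      intro σ w hwu hwv hw3 hB'
      obtain ⟨g₁, g₂, h1, h2, hne12⟩ := hB' w (by rw [hdw' w hwu hwv]; exact hw3)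
      exact ⟨ι g₁, ι g₂, h1, h2, hne12⟩
    rw [ncard_setOf, ncard_setOf, ncard_setOf]
    by_cases hdu3 : F.degree u = 3
    · -- u has degree 3 in F
      have hdu2 : F'.degree u = 2 := by omega
      have hcard2 : #(F'.incidenceFinset u) = 2 := by
        rw [card_incidenceFinset_eq_degree]; exact hdu2
      obtain ⟨f₁, f₂, hf12, hfpair⟩ := Finset.card_eq_two.mp hcard2
      have hf₁i : f₁ ∈ F'.incidenceFinset u := by rw [hfpair]; simp
      have hf₂i : f₂ ∈ F'.incidenceFinset u := by rw [hfpair]; simp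
      rw [SimpleGraph.mem_incidenceFinset] at hf₁i hf₂i
      obtain ⟨hf₁E, hf₁u⟩ := hf₁i
      obtain ⟨hf₂E, hf₂u⟩ := hf₂i
      obtain ⟨a₁, ha₁⟩ := Sym2.mem_iff_exists.mp hf₁u
      obtain ⟨a₂, ha₂⟩ := Sym2.mem_iff_exists.mp hf₂u
      have ha₁u : a₁ ≠ u := by
        rintro rfl
        exact F'.not_isDiag_of_mem_edgeSet hf₁E (by rw [ha₁]; exact Sym2.mk_isDiag_iff.mpr rfl)
      have hedges_at_u : ∀ g : F.edgeSet, u ∈ (g : Sym2 V) →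
          (g : Sym2 V) = e ∨ (g : Sym2 V) = f₁ ∨ (g : Sym2 V) = f₂ := by
        intro g hg
        by_cases hge : (g : Sym2 V) = e
        · exact Or.inl hge
        · have hgE' : (g : Sym2 V) ∈ F'.edgeSet :=
            (Set.ext_iff.mp hE' _).mpr ⟨g.2, by simp [hge]⟩
          have hmemi : (g : Sym2 V) ∈ F'.incidenceFinset u := by
            rw [SimpleGraph.mem_incidenceFinset]
            exact ⟨hgE', hg⟩
          rw [hfpair, Finset.mem_insert, Finset.mem_singleton] at hmemi
          exact Or.inr hmemi
      set H : SimpleGraph V := F'.deleteEdges {f₂} with hHdef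
      have hHadj : ∀ a c, H.Adj a c ↔ F'.Adj a c ∧ s(a, c) ≠ f₂ := by
        intro a c
        rw [hHdef, SimpleGraph.deleteEdges_adj, Set.mem_singleton_iff]
      have hHE : H.edgeSet = F'.edgeSet \ {f₂} := by rw [hHdef, edgeSet_deleteEdges]
      set D : Sym2 V → Prop := fun g => ∃ x, x ∈ g ∧ x ≠ u ∧ H.Reachable u x with hDdef
      have hDf₁ : D f₁ := by
        refine ⟨a₁, by rw [ha₁]; exact Sym2.mem_mk_right u a₁, ha₁u, ?_⟩
        have hadj1 : H.Adj u a₁ := by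
          rw [hHadj]
          refine ⟨F'.mem_edgeSet.mp (by rw [← ha₁]; exact hf₁E), ?_⟩
          rw [← ha₁]; exact hf12
        exact hadj1.reachable
      have hDf₂ : ¬ D f₂ := by
        rintro ⟨x, hx, hxu, hreach⟩
        rw [ha₂, Sym2.mem_iff] at hx
        rcases hx with rfl | rfl
        · exact hxu rfl
        · obtain ⟨W⟩ := hreach
          have hPpath := W.reverse.toPath.2
          have hPsub : ∀ g ∈ (W.reverse.toPath : H.Walk x u).edges, g ∈ F'.edgeSet :=
            fun g hg => ((Set.ext_iff.mp hHE _).mp (Walk.edges_subset_edgeSet _ hg)).1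
          have hadj2 : F'.Adj u x := F'.mem_edgeSet.mp (by rw [← ha₂]; exact hf₂E)
          have hcyc : (Walk.cons hadj2
              ((W.reverse.toPath : H.Walk x u).transfer F' hPsub)).IsCycle := by
            rw [Walk.cons_isCycle_iff]
            refine ⟨hPpath.transfer _, ?_⟩
            rw [Walk.edges_transfer]
            intro hmem
            have hin := Walk.edges_subset_edgeSet _ hmem
            exact ((Set.ext_iff.mp hHE _).mp hin).2 (Set.mem_singleton_iff.mpr ha₂.symm)
          exact hac' _ hcyc
      have hDmem : ∀ (g : F'.edgeSet) (w : V), w ∈ (g : Sym2 V) → w ≠ u →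
          (D (g : Sym2 V) ↔ H.Reachable u w) := by
        intro g w hwg hwu
        constructor
        · rintro ⟨x, hxg, hxu, hxr⟩
          by_cases hxw : x = w
          · exact hxw ▸ hxr
          · obtain ⟨c, hc⟩ := Sym2.mem_iff_exists.mp hxg
            have hwc : w = c := by
              rw [hc, Sym2.mem_iff] at hwg
              rcases hwg with h | h
              · exact absurd h.symm hxw
              · exact h
            subst hwc
            have hgf₂ : (g : Sym2 V) ≠ f₂ := by
              rw [hc, ha₂]
              intro hcon
              rw [Sym2.eq_iff] at hcon
              rcases hcon with ⟨h1, _⟩ | ⟨_, h2⟩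
              · exact hxu h1
              · exact hwu h2
            have hadj3 : H.Adj x w := by
              rw [hHadj]
              exact ⟨F'.mem_edgeSet.mp (by rw [← hc]; exact g.2), by rw [← hc]; exact hgf₂⟩
            exact hxr.trans hadj3.reachable
        · intro h
          exact ⟨w, hwg, hwu, h⟩
      set Φ : (F'.edgeSet → Bool) → (F'.edgeSet → Bool) :=
        fun σ g => if D (g : Sym2 V) then !(σ g) else σ g with hΦdef
      have hΦΦ : ∀ σ, Φ (Φ σ) = σ := by
        intro σ
        funext g
        by_cases hD : D (g : Sym2 V) <;> simp [hΦdef, hD]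
      have hΦf₁ : ∀ σ, Φ σ ⟨f₁, hf₁E⟩ = !(σ ⟨f₁, hf₁E⟩) := by
        intro σ; simp only [hΦdef]; rw [if_pos hDf₁]
      have hΦf₂ : ∀ σ, Φ σ ⟨f₂, hf₂E⟩ = σ ⟨f₂, hf₂E⟩ := by
        intro σ; simp only [hΦdef]; rw [if_neg hDf₂]
      have hΦbal : ∀ σ, Bal F' σ → Bal F' (Φ σ) := by
        intro σ hB w hw3
        have hwu : w ≠ u := by rintro rfl; omega
        obtain ⟨g₁, g₂, h1, h2, hne12⟩ := hB w hw3
        refine ⟨g₁, g₂, h1, h2, ?_⟩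
        have hiff : D (g₁ : Sym2 V) ↔ D (g₂ : Sym2 V) := by
          rw [hDmem g₁ w h1 hwu, hDmem g₂ w h2 hwu]
        by_cases hD : D (g₁ : Sym2 V)
        · simp only [hΦdef]
          rw [if_pos hD, if_pos (hiff.mp hD)]
          exact fun h => hne12 (Bool.not_inj h)
        · simp only [hΦdef]
          rw [if_neg hD, if_neg (fun h => hD (hiff.mpr h))]
          exact hne12
      have hBal3 : ∀ σ : F.edgeSet → Bool, Bal F σ ↔
          (Bal F' (res σ) ∧ ¬(σ e0 = res σ ⟨f₁, hf₁E⟩ ∧ σ e0 = res σ ⟨f₂, hf₂E⟩)) := by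
        intro σ
        constructor
        · intro hB
          constructor
          · intro w hw3
            have hwu : w ≠ u := by rintro rfl; omega
            have hwv : w ≠ v := by rintro rfl; omega
            exact hlift σ w hwu hwv hw3 hB
          · rintro ⟨hA, hBc⟩
            obtain ⟨e₁, e₂, h1, h2, hne12⟩ := hB u hdu3
            have hall : ∀ g : F.edgeSet, u ∈ (g : Sym2 V) → σ g = σ e0 := by
              intro g hg
              rcases hedges_at_u g hg with hh | hh | hh
              · exact congrArg σ (Subtype.ext hh)
              · rw [show g = ι ⟨f₁, hf₁E⟩ from Subtype.ext hh]
                exact hA.symm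
              · rw [show g = ι ⟨f₂, hf₂E⟩ from Subtype.ext hh]
                exact hBc.symm
            exact hne12 ((hall e₁ h1).trans (hall e₂ h2).symm)
        · rintro ⟨hB', hC⟩ w hw3
          by_cases hwu : w = u
          · subst hwu
            have hwe0 : w ∈ (e0 : Sym2 V) := by
              show w ∈ e
              rw [hedef]; exact Sym2.mem_mk_left w v
            by_cases hA : σ e0 = res σ ⟨f₁, hf₁E⟩
            · exact ⟨e0, ι ⟨f₂, hf₂E⟩, hwe0, hf₂u, fun h => hC ⟨hA, h⟩⟩
            · exact ⟨e0, ι ⟨f₁, hf₁E⟩, hwe0, hf₁u, fun h => hA h⟩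
          · have hwv : w ≠ v := by rintro rfl; omega
            exact hdrop σ w hwu hwv hw3 hB'
      have hNeq : Nat.card {σ : F.edgeSet → Bool // Bal F σ}
          = Nat.card {p : (F'.edgeSet → Bool) × Bool //
              Bal F' p.1 ∧ ¬(p.2 = p.1 ⟨f₁, hf₁E⟩ ∧ p.2 = p.1 ⟨f₂, hf₂E⟩)} :=
        Nat.card_congr (Equiv.subtypeEquiv base (fun σ => hBal3 σ))
      have hNf : Nat.card {p : (F'.edgeSet → Bool) × Bool //
              Bal F' p.1 ∧ ¬(p.2 = p.1 ⟨f₁, hf₁E⟩ ∧ p.2 = p.1 ⟨f₂, hf₂E⟩)}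
          = #(univ.filter (fun p : (F'.edgeSet → Bool) × Bool =>
              Bal F' p.1 ∧ ¬(p.2 = p.1 ⟨f₁, hf₁E⟩ ∧ p.2 = p.1 ⟨f₂, hf₂E⟩))) := by
        rw [Nat.card_eq_fintype_card, Fintype.card_subtype]
      have hsplit : #(univ.filter (fun p : (F'.edgeSet → Bool) × Bool =>
            Bal F' p.1 ∧ ¬(p.2 = p.1 ⟨f₁, hf₁E⟩ ∧ p.2 = p.1 ⟨f₂, hf₂E⟩)))
          = #(univ.filter (fun σ : F'.edgeSet → Bool =>
              Bal F' σ ∧ σ ⟨f₁, hf₁E⟩ = σ ⟨f₂, hf₂E⟩))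
            + 2 * #(univ.filter (fun σ : F'.edgeSet → Bool =>
              Bal F' σ ∧ ¬ σ ⟨f₁, hf₁E⟩ = σ ⟨f₂, hf₂E⟩)) := by
        rw [Finset.card_filter, Finset.card_filter, Finset.card_filter]
        rw [Fintype.sum_prod_type, Finset.mul_sum, ← Finset.sum_add_distrib]
        refine Finset.sum_congr rfl ?_
        intro σ' _
        rw [Fintype.sum_bool]
        convert bool_count (Bal F' σ') (σ' ⟨f₁, hf₁E⟩) (σ' ⟨f₂, hf₂E⟩) using 2
      have hN'f : Nat.card {σ' : F'.edgeSet → Bool // Bal F' σ'}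
          = #(univ.filter (fun σ : F'.edgeSet → Bool => Bal F' σ)) := by
        rw [Nat.card_eq_fintype_card, Fintype.card_subtype]
      have hpart : #(univ.filter (fun σ : F'.edgeSet → Bool =>
              Bal F' σ ∧ σ ⟨f₁, hf₁E⟩ = σ ⟨f₂, hf₂E⟩))
            + #(univ.filter (fun σ : F'.edgeSet → Bool =>
              Bal F' σ ∧ ¬ σ ⟨f₁, hf₁E⟩ = σ ⟨f₂, hf₂E⟩))
          = #(univ.filter (fun σ : F'.edgeSet → Bool => Bal F' σ)) := by
        rw [← Finset.filter_filter, ← Finset.filter_filter]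
        exact Finset.card_filter_add_card_filter_not _
      have hMM : #(univ.filter (fun σ : F'.edgeSet → Bool =>
              Bal F' σ ∧ σ ⟨f₁, hf₁E⟩ = σ ⟨f₂, hf₂E⟩))
          = #(univ.filter (fun σ : F'.edgeSet → Bool =>
              Bal F' σ ∧ ¬ σ ⟨f₁, hf₁E⟩ = σ ⟨f₂, hf₂E⟩)) := by
        refine Finset.card_bij (fun σ _ => Φ σ) ?_ ?_ ?_
        · intro σ hσ
          simp only [Finset.mem_filter, Finset.mem_univ, true_and] at hσ ⊢
          obtain ⟨hb, hee⟩ := hσ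
          refine ⟨hΦbal σ hb, ?_⟩
          rw [hΦf₁, hΦf₂, ← hee]
          cases σ ⟨f₁, hf₁E⟩ <;> simp
        · intro σ₁ h₁ σ₂ h₂ hijeq
          have hcong := congrArg Φ hijeq
          rwa [hΦΦ, hΦΦ] at hcong
        · intro τ hτ
          simp only [Finset.mem_filter, Finset.mem_univ, true_and] at hτ
          obtain ⟨hb, hee⟩ := hτ
          refine ⟨Φ τ, ?_, hΦΦ τ⟩
          simp only [Finset.mem_filter, Finset.mem_univ, true_and]
          refine ⟨hΦbal τ hb, ?_⟩
          rw [hΦf₁, hΦf₂]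
          revert hee
          cases hx : τ ⟨f₁, hf₁E⟩ <;> cases hy : τ ⟨f₂, hf₂E⟩ <;> simp
      have hNM : Nat.card {σ : F.edgeSet → Bool // Bal F σ}
          = 3 * #(univ.filter (fun σ : F'.edgeSet → Bool =>
              Bal F' σ ∧ σ ⟨f₁, hf₁E⟩ = σ ⟨f₂, hf₂E⟩)) := by
        rw [hNeq, hNf, hsplit, ← hMM]; ring
      have hN'M : Nat.card {σ' : F'.edgeSet → Bool // Bal F' σ'}
          = 2 * #(univ.filter (fun σ : F'.edgeSet → Bool =>
              Bal F' σ ∧ σ ⟨f₁, hf₁E⟩ = σ ⟨f₂, hf₂E⟩)) := by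
        rw [hN'f, ← hpart, ← hMM]; ring
      have hIH := ih (F'.edgeSet.ncard) (by rw [← hm']; exact Nat.lt_succ_self _) F' rfl
        hac' hdeg'
      rw [ncard_setOf, ncard_setOf, ncard_setOf] at hIH
      have h3c : #(univ.filter fun w => F.degree w = 3)
          = #(univ.filter fun w => F'.degree w = 3) + 1 := by
        have h3eq : (univ.filter fun w => F.degree w = 3)
            = insert u (univ.filter fun w => F'.degree w = 3) := by
          ext w
          simp only [Finset.mem_filter, Finset.mem_univ, true_and, Finset.mem_insert]
          by_cases hwu : w = u
          · subst hwu; simp [hdu3]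
          · by_cases hwv : w = v
            · subst hwv; simp [hv1, hdv', hwu]
            · rw [← hdw' w hwu hwv]
              simp [hwu]
        rw [h3eq, Finset.card_insert_of_notMem (by simp [hdu2])]
      have h2c : #(univ.filter fun w => F'.degree w = 2)
          = #(univ.filter fun w => F.degree w = 2) + 1 := by
        have h2eq : (univ.filter fun w => F'.degree w = 2)
            = insert u (univ.filter fun w => F.degree w = 2) := by
          ext w
          simp only [Finset.mem_filter, Finset.mem_univ, true_and, Finset.mem_insert]
          by_cases hwu : w = u
          · subst hwu; simp [hdu2]
          · by_cases hwv : w = v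
            · subst hwv; simp [hv1, hdv', hwu]
            · rw [hdw' w hwu hwv]
              simp [hwu]
        rw [h2eq, Finset.card_insert_of_notMem (by simp [hdu3])]
      have h0c : #(univ.filter fun w => F'.degree w = 0)
          = #(univ.filter fun w => F.degree w = 0) + 1 := by
        have h0eq : (univ.filter fun w => F'.degree w = 0)
            = insert v (univ.filter fun w => F.degree w = 0) := by
          ext w
          simp only [Finset.mem_filter, Finset.mem_univ, true_and, Finset.mem_insert]
          by_cases hwu : w = u
          · subst hwu; simp [hdu2, hune, hdu3]
          · by_cases hwv : w = v
            · subst hwv; simp [hdv']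
            · rw [hdw' w hwu hwv]
              simp [hwv]
        rw [h0eq, Finset.card_insert_of_notMem (by simp [hv1])]
      rw [hm]
      refine Nat.eq_of_mul_eq_mul_left (by norm_num : 0 < 2) ?_
      rw [hNM, h3c]
      rw [hN'M, h2c, h0c] at hIH
      rw [show F'.edgeSet.ncard + (#(univ.filter fun w => F.degree w = 0) + 1)
          = m + #(univ.filter fun w => F.degree w = 0) from by rw [← hm']; ring] at hIH
      calc 2 * (3 * #(univ.filter (fun σ : F'.edgeSet → Bool =>
              Bal F' σ ∧ σ ⟨f₁, hf₁E⟩ = σ ⟨f₂, hf₂E⟩)) *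
            2 ^ (m + #(univ.filter fun w => F.degree w = 0)))
          = 3 * (2 * #(univ.filter (fun σ : F'.edgeSet → Bool =>
              Bal F' σ ∧ σ ⟨f₁, hf₁E⟩ = σ ⟨f₂, hf₂E⟩)) *
            2 ^ (m + #(univ.filter fun w => F.degree w = 0))) := by ring
        _ = 3 * (2 ^ (#(univ.filter fun w => F.degree w = 2) + 1 + Fintype.card V) *
            3 ^ #(univ.filter fun w => F'.degree w = 3)) := by rw [hIH]
        _ = 2 * (2 ^ (#(univ.filter fun w => F.degree w = 2) + Fintype.card V) *
            3 ^ (#(univ.filter fun w => F'.degree w = 3) + 1)) := by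
            rw [show #(univ.filter fun w => F.degree w = 2) + 1 + Fintype.card V
                = (#(univ.filter fun w => F.degree w = 2) + Fintype.card V) + 1 from by ring,
              pow_succ, pow_succ]
            ring
    · -- u has degree 1 or 2 in F
      have hdle2 : F.degree u ≤ 2 := by omega
      have hBal_iff : ∀ σ : F.edgeSet → Bool, Bal F σ ↔ Bal F' (res σ) := by
        intro σ
        constructor
        · intro hB w hw3
          have hwu : w ≠ u := by rintro rfl; omega
          have hwv : w ≠ v := by rintro rfl; omega
          exact hlift σ w hwu hwv hw3 hB
        · intro hB' w hw3
          have hwu : w ≠ u := by rintro rfl; omega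
          have hwv : w ≠ v := by rintro rfl; omega
          exact hdrop σ w hwu hwv hw3 hB'
      have hEq : {σ : F.edgeSet → Bool // Bal F σ} ≃
          {σ' : F'.edgeSet → Bool // Bal F' σ'} × Bool :=
        (Equiv.subtypeEquiv base (fun σ =>
          ⟨fun h => ⟨(hBal_iff σ).mp h, trivial⟩, fun h => (hBal_iff σ).mpr h.1⟩)).trans
          ((Equiv.subtypeProdEquivProd).trans
            (Equiv.prodCongr (Equiv.refl _) (Equiv.subtypeUnivEquiv fun _ => trivial)))
      have hcb : Nat.card Bool = 2 := by simp [Nat.card_eq_fintype_card]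
      have hN : Nat.card {σ : F.edgeSet → Bool // Bal F σ}
          = 2 * Nat.card {σ' : F'.edgeSet → Bool // Bal F' σ'} := by
        rw [Nat.card_congr hEq, Nat.card_prod, hcb, mul_comm]
      have hIH := ih (F'.edgeSet.ncard) (by omega) F' rfl hac' hdeg'
      rw [ncard_setOf, ncard_setOf, ncard_setOf] at hIH
      have h3eq : (univ.filter fun w => F'.degree w = 3)
          = (univ.filter fun w => F.degree w = 3) := by
        ext w
        simp only [Finset.mem_filter, Finset.mem_univ, true_and]
        by_cases hwu : w = u
        · subst hwu; omega
        · by_cases hwv : w = v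
          · subst hwv; omega
          · rw [hdw' w hwu hwv]
      rcases (by omega : F.degree u = 1 ∨ F.degree u = 2) with hd | hd
      · -- degree of u is 1
        have h2eq : (univ.filter fun w => F'.degree w = 2)
            = (univ.filter fun w => F.degree w = 2) := by
          ext w
          simp only [Finset.mem_filter, Finset.mem_univ, true_and]
          by_cases hwu : w = u
          · subst hwu; omega
          · by_cases hwv : w = v
            · subst hwv; omega
            · rw [hdw' w hwu hwv]
        have hc0 : #(univ.filter fun w => F'.degree w = 0)
            = #(univ.filter fun w => F.degree w = 0) + 2 := by
          have h0eq : (univ.filter fun w => F'.degree w = 0)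
              = insert u (insert v (univ.filter fun w => F.degree w = 0)) := by
            ext w
            simp only [Finset.mem_filter, Finset.mem_univ, true_and, Finset.mem_insert]
            by_cases hwu : w = u
            · subst hwu
              constructor
              · intro _; exact Or.inl rfl
              · intro _; omega
            · by_cases hwv : w = v
              · subst hwv
                constructor
                · intro _; exact Or.inr (Or.inl rfl)
                · intro _; exact hdv'
              · rw [hdw' w hwu hwv]
                constructor
                · exact fun h => Or.inr (Or.inr h)
                · rintro (h | h | h)
                  exacts [absurd h hwu, absurd h hwv, h]
          rw [h0eq, Finset.card_insert_of_notMem, Finset.card_insert_of_notMem]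
          · simp [hv1]
          · simp [Finset.mem_insert, hune, hd]
        rw [h3eq, h2eq, hc0] at hIH
        rw [hN, hm]
        rw [show F'.edgeSet.ncard + (#(univ.filter fun w => F.degree w = 0) + 2)
            = (m + #(univ.filter fun w => F.degree w = 0)) + 1 from by omega, pow_succ] at hIH
        rw [← hIH]
        ring
      · -- degree of u is 2
        have hc2 : #(univ.filter fun w => F'.degree w = 2) + 1
            = #(univ.filter fun w => F.degree w = 2) := by
          have h2eq : (univ.filter fun w => F'.degree w = 2)
              = (univ.filter fun w => F.degree w = 2).erase u := by
            ext w
            simp only [Finset.mem_filter, Finset.mem_univ, true_and, Finset.mem_erase]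
            by_cases hwu : w = u
            · subst hwu; simp; omega
            · by_cases hwv : w = v
              · subst hwv; simp [hdv', hv1]
              · rw [hdw' w hwu hwv]
                exact ⟨fun h => ⟨hwu, h⟩, fun h => h.2⟩
          rw [h2eq]
          exact Finset.card_erase_add_one (by simp [hd])
        have hc0 : #(univ.filter fun w => F'.degree w = 0)
            = #(univ.filter fun w => F.degree w = 0) + 1 := by
          have h0eq : (univ.filter fun w => F'.degree w = 0)
              = insert v (univ.filter fun w => F.degree w = 0) := by
            ext w
            simp only [Finset.mem_filter, Finset.mem_univ, true_and, Finset.mem_insert]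
            by_cases hwu : w = u
            · subst hwu
              constructor
              · intro h; omega
              · rintro (h | h)
                · exact absurd h hune
                · omega
            · by_cases hwv : w = v
              · subst hwv
                constructor
                · intro _; exact Or.inl rfl
                · intro _; exact hdv'
              · rw [hdw' w hwu hwv]
                constructor
                · exact fun h => Or.inr h
                · rintro (h | h)
                  exacts [absurd h hwv, h]
          rw [h0eq, Finset.card_insert_of_notMem]
          simp [hv1]
        rw [h3eq, hc0] at hIH
        rw [hN, hm, ← hc2]
        rw [show F'.edgeSet.ncard + (#(univ.filter fun w => F.degree w = 0) + 1)
            = m + #(univ.filter fun w => F.degree w = 0) from by omega] at hIH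
        rw [show #(univ.filter fun w => F'.degree w = 2) + 1 + Fintype.card V
            = (#(univ.filter fun w => F'.degree w = 2) + Fintype.card V) + 1 from by omega,
          pow_succ]
        calc 2 * Nat.card {σ' : F'.edgeSet → Bool // Bal F' σ'} *
              2 ^ (m + #(univ.filter fun w => F.degree w = 0))
            = 2 * (Nat.card {σ' : F'.edgeSet → Bool // Bal F' σ'} *
              2 ^ (m + #(univ.filter fun w => F.degree w = 0))) := by ring
          _ = 2 * (2 ^ (#(univ.filter fun w => F'.degree w = 2) + Fintype.card V) *
              3 ^ #(univ.filter fun w => F.degree w = 3)) := by rw [hIH]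
          _ = _ := by ring

/-- Let `F` be a finite tree with at least one edge in which every vertex has degree at
most `3`.  A sign function (an assignment of `+`/`−`, here `Bool`, to each edge) is
balanced if at every vertex of degree `3` the three incident edges do not all carry the
same sign.  If `n₂` and `n₃` are the numbers of vertices of degree exactly `2` and `3`,
then the number of balanced sign functions equals `2 ^ (n₂ + 1) * 3 ^ n₃`. -/
theorem balanced_sign_functions_tree (V : Type*) [Fintype V] [DecidableEq V]
    (F : SimpleGraph V) [DecidableRel F.Adj]
    (htree : F.IsTree)
    (hdeg : ∀ v, F.degree v ≤ 3)
    (hedge : F.edgeSet.Nonempty)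
    (n₂ n₃ : ℕ)
    (h2 : n₂ = {v | F.degree v = 2}.ncard)
    (h3 : n₃ = {v | F.degree v = 3}.ncard) :
    Nat.card {σ : F.edgeSet → Bool //
        ∀ v, F.degree v = 3 →
          ∃ e₁ e₂ : F.edgeSet, v ∈ (e₁ : Sym2 V) ∧ v ∈ (e₂ : Sym2 V) ∧ σ e₁ ≠ σ e₂}
      = 2 ^ (n₂ + 1) * 3 ^ n₃ := by
  classical
  have key := count_aux (V := V) F.edgeSet.ncard F rfl htree.IsAcyclic hdeg
  have hnontriv : Nontrivial V := by
    obtain ⟨g, hg⟩ := hedge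
    induction g using Sym2.ind with
    | _ a b => exact ⟨a, b, (F.mem_edgeSet.mp hg).ne⟩
  have h0 : {v | F.degree v = 0}.ncard = 0 := by
    rw [Set.ncard_eq_zero]
    ext w
    simp only [Set.mem_setOf_eq, Set.mem_empty_iff_false, iff_false]
    intro hw0
    obtain ⟨z, hz⟩ := exists_ne w
    obtain ⟨p⟩ := htree.isConnected.preconnected w z
    have hlen : p.length ≠ 0 := fun h => hz.symm (Walk.eq_of_length_eq_zero h)
    obtain ⟨x, hadj, q, hq⟩ := Walk.not_nil_iff.mp
      (by rw [Walk.nil_iff_length_eq]; exact hlen)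
    have := (F.degree_pos_iff_exists_adj w).mpr ⟨x, hadj⟩
    omega
  have hEc : F.edgeSet.ncard + 1 = Fintype.card V := by
    rw [← Nat.card_coe_set_eq, Nat.card_eq_fintype_card, ← Set.toFinset_card]
    exact htree.card_edgeFinset
  rw [← h2, ← h3, h0, ← hEc] at key
  refine Nat.eq_of_mul_eq_mul_right
    (show 0 < 2 ^ F.edgeSet.ncard from pow_pos (by norm_num) _) ?_
  calc Nat.card {σ : F.edgeSet → Bool //
        ∀ v, F.degree v = 3 →
          ∃ e₁ e₂ : F.edgeSet, v ∈ (e₁ : Sym2 V) ∧ v ∈ (e₂ : Sym2 V) ∧ σ e₁ ≠ σ e₂} *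
        2 ^ F.edgeSet.ncard
      = Nat.card {σ : F.edgeSet → Bool // Bal F σ} *
        2 ^ (F.edgeSet.ncard + 0) := by rw [Nat.add_zero]
    _ = 2 ^ (n₂ + (F.edgeSet.ncard + 1)) * 3 ^ n₃ := key
    _ = 2 ^ (n₂ + 1) * 3 ^ n₃ * 2 ^ F.edgeSet.ncard := by
        rw [show n₂ + (F.edgeSet.ncard + 1) = (n₂ + 1) + F.edgeSet.ncard from by ring,
          pow_add]
        ring
end

section
/- Let F be a finite forest with maximum degree ≤ 3, having n₂ vertices of degree 2, n₃ vertices of degree 3, and c connected components each containing at least one edge (components that are isolated vertices are discarded). Then the number of balanced sign functions on the edges of F (functions to {+,−} such that no degree-3 vertex has all three incident edges equal) is 2^{n₂+c}·3^{n₃}. -/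
set_option linter.unusedSectionVars false
set_option linter.unnecessarySimpa false
set_option maxHeartbeats 1000000

open SimpleGraph Finset

section BSFAux

variable {V : Type*} [Fintype V] [DecidableEq V]

lemma bsf_bool1 (a c : Bool) : ((a ^^ c) ^^ c) = a := by cases a <;> cases c <;> rfl
lemma bsf_bool2 (c : Bool) : (true ^^ c) ≠ c := by cases c <;> simp

def bsfP (G : SimpleGraph V) [DecidableRel G.Adj] (σ : G.edgeSet → Bool) : Prop :=
  ∀ x, G.degree x = 3 →
    ∃ e₁ e₂ : G.edgeSet, x ∈ (e₁ : Sym2 V) ∧ x ∈ (e₂ : Sym2 V) ∧ σ e₁ ≠ σ e₂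

lemma bsf_eq_getVert_one {F : SimpleGraph V} (hF : F.IsAcyclic) {a b x : V}
    {p : F.Walk a b} (hp : p.IsPath) (hadj : F.Adj a x) (hx : x ∈ p.support) :
    x = p.getVert 1 := by
  have hxa : a ≠ x := hadj.ne
  have hP1 : (Walk.cons hadj Walk.nil).IsPath := by
    rw [Walk.cons_isPath_iff]
    exact ⟨Walk.IsPath.nil, by simp [hxa]⟩
  have hP2 : (p.takeUntil x hx).IsPath := hp.takeUntil hx
  have := hF.path_unique ⟨Walk.cons hadj Walk.nil, hP1⟩ ⟨p.takeUntil x hx, hP2⟩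
  have hw : (Walk.cons hadj Walk.nil) = p.takeUntil x hx := congrArg Subtype.val this
  have hspec := p.take_spec hx
  rw [← hw] at hspec
  rw [← hspec]
  simp [Walk.getVert_cons_succ]

/-- The endpoint of a maximal-length path in an acyclic graph has a unique neighbor. -/
lemma bsf_maximal_endpoint {F : SimpleGraph V} [DecidableRel F.Adj] (hF : F.IsAcyclic)
    {a b : V} (p : F.Walk a b) (hp : p.IsPath) (hlen : 0 < p.length)
    (hmax : ∀ (x y : V) (q : F.Walk x y), q.IsPath → q.length ≤ p.length) :
    F.neighborFinset a = {p.getVert 1} := by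
  ext x
  simp only [mem_neighborFinset, Finset.mem_singleton]
  constructor
  · intro hadj
    by_cases hx : x ∈ p.support
    · exact bsf_eq_getVert_one hF hp hadj hx
    · exfalso
      have hq : (Walk.cons hadj.symm p).IsPath := by
        rw [Walk.cons_isPath_iff]; exact ⟨hp, hx⟩
      have := hmax _ _ _ hq
      simp [Walk.length_cons] at this
  · rintro rfl
    have := p.adj_getVert_succ (i := 0) hlen
    simpa using this

lemma bsf_exists_pendant (F : SimpleGraph V) [DecidableRel F.Adj] (hF : F.IsAcyclic)
    (hne : F.edgeFinset.Nonempty) :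
    ∃ w v, F.Adj w v ∧ F.degree v = 1 ∧
      ((F.neighborFinset w).filter (fun x => F.degree x ≠ 1)).card ≤ 1 := by
  obtain ⟨e, he⟩ := hne
  rw [mem_edgeFinset] at he
  induction e with
  | _ c d =>
  rw [mem_edgeSet] at he
  set S : Set ℕ := {n | ∃ (x y : V) (q : F.Walk x y), q.IsPath ∧ q.length = n} with hS
  have h1S : 1 ∈ S := by
    refine ⟨c, d, Walk.cons he Walk.nil, ?_, rfl⟩
    rw [Walk.cons_isPath_iff]
    exact ⟨Walk.IsPath.nil, by simp [he.ne]⟩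
  have hbdd : BddAbove S := by
    refine ⟨Fintype.card V, ?_⟩
    rintro n ⟨x, y, q, hq, rfl⟩
    exact hq.length_lt.le
  have hmem : sSup S ∈ S := Nat.sSup_mem ⟨1, h1S⟩ hbdd
  obtain ⟨a, b, p, hp, hplen⟩ := hmem
  have hmax : ∀ (x y : V) (q : F.Walk x y), q.IsPath → q.length ≤ p.length := by
    intro x y q hq
    rw [hplen]
    exact le_csSup hbdd ⟨x, y, q, hq, rfl⟩
  have hlen : 0 < p.length := by
    rw [hplen]
    exact le_csSup hbdd h1S
  clear hplen h1S hS
  cases p with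
  | nil => simp at hlen
  | cons h q =>
  rename_i w0
  have hqpath : q.IsPath := ((Walk.cons_isPath_iff h q).mp hp).1
  have hanotq : a ∉ q.support := ((Walk.cons_isPath_iff h q).mp hp).2
  have hdeg_a : F.neighborFinset a = {w0} := by
    have := bsf_maximal_endpoint hF _ hp hlen hmax
    simpa using this
  have hdega : F.degree a = 1 := by rw [degree, hdeg_a]; simp
  cases q with
  | nil =>
    have hrev : (Walk.cons h Walk.nil).reverse.IsPath := hp.reverse
    have hrevlen : 0 < (Walk.cons h Walk.nil).reverse.length := by
      simpa [Walk.length_reverse] using hlen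
    have hmax' : ∀ (x y : V) (q : F.Walk x y), q.IsPath →
        q.length ≤ (Walk.cons h Walk.nil).reverse.length := by
      intro x y q hq
      rw [Walk.length_reverse]
      exact hmax _ _ _ hq
    have hdeg_b : F.neighborFinset b = {(Walk.cons h Walk.nil).reverse.getVert 1} :=
      bsf_maximal_endpoint hF _ hrev hrevlen hmax'
    have haw0 : a ∈ F.neighborFinset b := by
      rw [mem_neighborFinset]; exact h.symm
    rw [hdeg_b, Finset.mem_singleton] at haw0
    rw [← haw0] at hdeg_b
    refine ⟨b, a, h.symm, hdega, ?_⟩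
    rw [hdeg_b]
    simp [Finset.filter_singleton, hdega]
  | cons h2 r =>
    rename_i s2
    refine ⟨w0, a, h.symm, hdega, ?_⟩
    have hsub : (F.neighborFinset w0).filter (fun x => F.degree x ≠ 1) ⊆ {s2} := by
      intro x hxmem
      rw [Finset.mem_filter, mem_neighborFinset] at hxmem
      obtain ⟨hadjx, hdx⟩ := hxmem
      rw [Finset.mem_singleton]
      by_contra hxs2
      by_cases hxq : x ∈ (Walk.cons h2 r).support
      · exact hxs2 (by simpa using bsf_eq_getVert_one hF hqpath hadjx hxq)
      · have hq' : (Walk.cons hadjx.symm (Walk.cons h2 r)).IsPath := by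
          rw [Walk.cons_isPath_iff]; exact ⟨hqpath, hxq⟩
        have hlen' : (Walk.cons hadjx.symm (Walk.cons h2 r)).length
            = (Walk.cons h (Walk.cons h2 r)).length := by
          simp [Walk.length_cons]
        have hmax'' : ∀ (z y : V) (q' : F.Walk z y), q'.IsPath →
            q'.length ≤ (Walk.cons hadjx.symm (Walk.cons h2 r)).length := by
          intro z y q' hq'p
          rw [hlen']
          exact hmax _ _ _ hq'p
        have hdx1 : F.neighborFinset x
            = {(Walk.cons hadjx.symm (Walk.cons h2 r)).getVert 1} :=
          bsf_maximal_endpoint hF _ hq' (by simp [Walk.length_cons]) hmax''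
        exact hdx (by rw [degree, hdx1]; simp)
    calc ((F.neighborFinset w0).filter (fun x => F.degree x ≠ 1)).card
        ≤ ({s2} : Finset V).card := Finset.card_le_card hsub
      _ = 1 := by simp

variable {F F' : SimpleGraph V} [DecidableRel F.Adj] [DecidableRel F'.Adj] {w : V} {L : Finset V}

lemma bsf_le (hadj' : ∀ x y, F'.Adj x y ↔ (F.Adj x y ∧ ¬∃ z ∈ L, s(x, y) = s(w, z))) :
    F' ≤ F := fun {x y} h => ((hadj' x y).mp h).1

lemma bsf_nf_singleton {z : V} (h1 : F.degree z = 1) (hz : F.Adj z w) :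
    F.neighborFinset z = {w} := by
  obtain ⟨a, ha⟩ := Finset.card_eq_one.mp h1
  have hw : w ∈ F.neighborFinset z := by rw [mem_neighborFinset]; exact hz
  rw [ha] at hw ⊢
  rw [Finset.mem_singleton] at hw
  rw [hw]

lemma bsf_nf_eq (hadj' : ∀ x y, F'.Adj x y ↔ (F.Adj x y ∧ ¬∃ z ∈ L, s(x, y) = s(w, z)))
    (x : V) (hxw : x ≠ w) (hxL : x ∉ L) :
    F'.neighborFinset x = F.neighborFinset x := by
  ext y
  simp only [mem_neighborFinset, hadj']
  refine ⟨fun h => h.1, fun h => ⟨h, ?_⟩⟩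
  rintro ⟨z, hzL, hzeq⟩
  rw [Sym2.eq_iff] at hzeq
  rcases hzeq with ⟨rfl, rfl⟩ | ⟨rfl, rfl⟩
  · exact hxw rfl
  · exact hxL hzL

lemma bsf_nf_leaf (hL : ∀ z ∈ L, F.Adj w z ∧ F.degree z = 1)
    (hadj' : ∀ x y, F'.Adj x y ↔ (F.Adj x y ∧ ¬∃ z ∈ L, s(x, y) = s(w, z)))
    {z : V} (hz : z ∈ L) : F'.neighborFinset z = ∅ := by
  ext y
  simp only [mem_neighborFinset, Finset.notMem_empty, iff_false]
  intro hy
  rw [hadj'] at hy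
  obtain ⟨hy1, hy2⟩ := hy
  have hnf : F.neighborFinset z = {w} := bsf_nf_singleton (hL z hz).2 (hL z hz).1.symm
  have : y ∈ F.neighborFinset z := by rw [mem_neighborFinset]; exact hy1
  rw [hnf, Finset.mem_singleton] at this
  subst this
  exact hy2 ⟨z, hz, Sym2.eq_swap⟩

lemma bsf_nf_w (hadj' : ∀ x y, F'.Adj x y ↔ (F.Adj x y ∧ ¬∃ z ∈ L, s(x, y) = s(w, z))) :
    F'.neighborFinset w = F.neighborFinset w \ L := by
  ext y
  simp only [mem_neighborFinset, Finset.mem_sdiff, hadj']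
  constructor
  · rintro ⟨h1, h2⟩
    refine ⟨h1, fun hyL => h2 ⟨y, hyL, rfl⟩⟩
  · rintro ⟨h1, h2⟩
    refine ⟨h1, ?_⟩
    rintro ⟨z, hzL, hzeq⟩
    rw [Sym2.eq_iff] at hzeq
    rcases hzeq with ⟨-, rfl⟩ | ⟨rfl, rfl⟩
    · exact h2 hzL
    · exact h1.ne rfl

lemma bsf_reach (hL : ∀ z ∈ L, F.Adj w z ∧ F.degree z = 1)
    (hadj' : ∀ x y, F'.Adj x y ↔ (F.Adj x y ∧ ¬∃ z ∈ L, s(x, y) = s(w, z)))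
    {x y : V} (hx : x ∉ L) (hy : y ∉ L) (h : F.Reachable x y) : F'.Reachable x y := by
  obtain ⟨p0⟩ := h
  obtain ⟨p, hp⟩ := p0.toPath
  have hsup : ∀ z ∈ L, z ∉ p.support := by
    intro z hzL hzsup
    have hzx : z ≠ x := fun h => (h ▸ hx) hzL
    have hzy : z ≠ y := fun h => (h ▸ hy) hzL
    have hnf : F.neighborFinset z = {w} := bsf_nf_singleton (hL z hzL).2 (hL z hzL).1.symm
    set t := p.takeUntil z hzsup with ht_def
    set d := p.dropUntil z hzsup with hd_def
    have htl : 0 < t.length := by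
      rcases Nat.eq_zero_or_pos t.length with h0 | h0
      · exact absurd (Walk.eq_of_length_eq_zero h0) hzx.symm
      · exact h0
    have hdl : 0 < d.length := by
      rcases Nat.eq_zero_or_pos d.length with h0 | h0
      · exact absurd (Walk.eq_of_length_eq_zero h0) hzy
      · exact h0
    -- w is in t.support
    have hwt : w ∈ t.support := by
      have hadjp : F.Adj (t.getVert (t.length - 1)) (t.getVert t.length) := by
        have := t.adj_getVert_succ (i := t.length - 1) (by omega)
        rwa [Nat.sub_add_cancel (by omega)] at this
      rw [Walk.getVert_length] at hadjp
      have : t.getVert (t.length - 1) ∈ F.neighborFinset z := by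
        rw [mem_neighborFinset]; exact hadjp.symm
      rw [hnf, Finset.mem_singleton] at this
      rw [← this]
      rw [Walk.mem_support_iff_exists_getVert]
      exact ⟨t.length - 1, rfl, by omega⟩
    -- w is in d.support.tail
    have hwd : w ∈ d.support.tail := by
      cases hd2 : d with
      | nil => rw [hd2] at hdl; simp at hdl
      | cons h2 r2 =>
        rename_i c2
        have hc2 : c2 = w := by
          have : c2 ∈ F.neighborFinset z := by rw [mem_neighborFinset]; exact h2
          rwa [hnf, Finset.mem_singleton] at this
        rw [Walk.support_cons, List.tail_cons]
        rw [← hc2]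
        exact r2.start_mem_support
    have hnodup := hp.support_nodup
    rw [← p.take_spec hzsup, Walk.support_append, List.nodup_append] at hnodup
    exact hnodup.2.2 w hwt w hwd rfl
  have hedges : ∀ e ∈ p.edges, e ∈ F'.edgeSet := by
    intro e
    induction e with
    | _ a b =>
      intro heme
      have he1 : F.Adj a b := (p.edges_subset_edgeSet heme)
      rw [mem_edgeSet, hadj']
      refine ⟨he1, ?_⟩
      rintro ⟨z, hzL, hzeq⟩
      rw [hzeq] at heme
      exact hsup z hzL (Walk.snd_mem_support_of_mem_edges p heme)
  exact (p.transfer F' hedges).reachable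

lemma bsf_acyclic (hle : F' ≤ F) (hF : F.IsAcyclic) : F'.IsAcyclic := by
  intro v c hc
  exact hF (c.mapLe hle) (hc.mapLe hle)

lemma bsf_comp_eq (hle : F' ≤ F)
    (hreach : ∀ x y : V, (∃ x', F'.Adj x x') → (∃ y', F'.Adj y y') →
      F.Reachable x y → F'.Reachable x y)
    (hedge : ∀ a b : V, F.Adj a b → ∃ c d : V, F'.Adj c d ∧ F.Reachable a c) :
    {C : F.ConnectedComponent | ∃ v w, F.Adj v w ∧ F.connectedComponentMk v = C}.ncard
      = {C : F'.ConnectedComponent | ∃ v w, F'.Adj v w ∧ F'.connectedComponentMk v = C}.ncard := by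
  set φ : F'.ConnectedComponent → F.ConnectedComponent :=
    ConnectedComponent.map (Hom.ofLE hle) with hφ
  have hφmk : ∀ a : V, φ (F'.connectedComponentMk a) = F.connectedComponentMk a := by
    intro a
    simp [hφ, ConnectedComponent.map_mk, Hom.ofLE_apply]
  set B := {C : F'.ConnectedComponent | ∃ v w, F'.Adj v w ∧ F'.connectedComponentMk v = C}
  set A := {C : F.ConnectedComponent | ∃ v w, F.Adj v w ∧ F.connectedComponentMk v = C}
  have hmapsto : ∀ C' : ↥B, φ C'.1 ∈ A := by
    rintro ⟨C', ⟨a, b, hab, rfl⟩⟩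
    exact ⟨a, b, hle hab, (hφmk a).symm⟩
  set f : ↥B → ↥A := fun C' => ⟨φ C'.1, hmapsto C'⟩ with hf
  have hinj : Function.Injective f := by
    rintro ⟨C1, h1⟩ ⟨C2, h2⟩ heq
    obtain ⟨a1, b1, hab1, rfl⟩ := h1
    obtain ⟨a2, b2, hab2, rfl⟩ := h2
    simp only [hf, Subtype.mk.injEq, hφmk] at heq
    have hr : F.Reachable a1 a2 := ConnectedComponent.exact heq
    exact Subtype.ext (ConnectedComponent.sound (hreach a1 a2 ⟨b1, hab1⟩ ⟨b2, hab2⟩ hr))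
  have hsurj : Function.Surjective f := by
    rintro ⟨C, hC⟩
    obtain ⟨a, b, hab, rfl⟩ := hC
    obtain ⟨c, d, hcd, hac⟩ := hedge a b hab
    refine ⟨⟨F'.connectedComponentMk c, ⟨c, d, hcd, rfl⟩⟩, ?_⟩
    simp only [hf, Subtype.mk.injEq, hφmk]
    exact (ConnectedComponent.sound hac).symm
  have := Nat.card_eq_of_bijective f ⟨hinj, hsurj⟩
  rwa [Nat.card_coe_set_eq, Nat.card_coe_set_eq, eq_comm] at this

lemma bsf_comp_succ (hle : F' ≤ F) {v w : V} (hvw : F.Adj v w)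
    (hreach : ∀ x y : V, (∃ x', F'.Adj x x') → (∃ y', F'.Adj y y') →
      F.Reachable x y → F'.Reachable x y)
    (hnot : ∀ a b : V, F.Adj a b → ¬ F'.Adj a b → F.Reachable a v)
    (hiso : ∀ x, F.Reachable x v → ∀ y, ¬F'.Adj x y) :
    {C : F.ConnectedComponent | ∃ v w, F.Adj v w ∧ F.connectedComponentMk v = C}.ncard
      = {C : F'.ConnectedComponent | ∃ v w, F'.Adj v w ∧ F'.connectedComponentMk v = C}.ncard
        + 1 := by
  set φ : F'.ConnectedComponent → F.ConnectedComponent :=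
    ConnectedComponent.map (Hom.ofLE hle) with hφ
  have hφmk : ∀ a : V, φ (F'.connectedComponentMk a) = F.connectedComponentMk a := by
    intro a
    simp [hφ, ConnectedComponent.map_mk, Hom.ofLE_apply]
  set B := {C : F'.ConnectedComponent | ∃ v w, F'.Adj v w ∧ F'.connectedComponentMk v = C}
  set A := {C : F.ConnectedComponent | ∃ v w, F.Adj v w ∧ F.connectedComponentMk v = C}
  set C₀ := F.connectedComponentMk v with hC₀
  have hmapsto : ∀ C' : ↥B, φ C'.1 ∈ A \ {C₀} := by
    rintro ⟨C', ⟨a, b, hab, rfl⟩⟩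
    refine ⟨⟨a, b, hle hab, (hφmk a).symm⟩, ?_⟩
    simp only [Set.mem_singleton_iff, hφmk]
    intro heq
    exact hiso a (ConnectedComponent.exact heq) b hab
  set f : ↥B → ↥(A \ {C₀}) := fun C' => ⟨φ C'.1, hmapsto C'⟩ with hf
  have hinj : Function.Injective f := by
    rintro ⟨C1, h1⟩ ⟨C2, h2⟩ heq
    obtain ⟨a1, b1, hab1, rfl⟩ := h1
    obtain ⟨a2, b2, hab2, rfl⟩ := h2
    simp only [hf, Subtype.mk.injEq, hφmk] at heq
    have hr : F.Reachable a1 a2 := ConnectedComponent.exact heq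
    exact Subtype.ext (ConnectedComponent.sound (hreach a1 a2 ⟨b1, hab1⟩ ⟨b2, hab2⟩ hr))
  have hsurj : Function.Surjective f := by
    rintro ⟨C, hC, hC0⟩
    obtain ⟨a, b, hab, rfl⟩ := hC
    have hab' : F'.Adj a b := by
      by_contra hne
      exact hC0 (ConnectedComponent.sound (hnot a b hab hne))
    refine ⟨⟨F'.connectedComponentMk a, ⟨a, b, hab', rfl⟩⟩, ?_⟩
    simp only [hf, Subtype.mk.injEq, hφmk]
  have hcard := Nat.card_eq_of_bijective f ⟨hinj, hsurj⟩
  rw [Nat.card_coe_set_eq, Nat.card_coe_set_eq] at hcard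
  have hC₀A : C₀ ∈ A := ⟨v, w, hvw, rfl⟩
  rw [hcard]
  exact (Set.ncard_diff_singleton_add_one hC₀A (Set.toFinite A)).symm

lemma bsf_count_one {F F' : SimpleGraph V} [DecidableRel F.Adj] [DecidableRel F'.Adj]
    {w v : V} (hvw : F.Adj w v)
    (hadj' : ∀ x y, F'.Adj x y ↔ (F.Adj x y ∧ s(x, y) ≠ s(w, v)))
    (hdeg3 : ∀ x, F.degree x = 3 ↔ F'.degree x = 3)
    (hw3 : ∀ x, F.degree x = 3 → x ≠ w ∧ x ≠ v) :
    Nat.card {σ : F.edgeSet → Bool // bsfP F σ}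
      = 2 * Nat.card {σ' : F'.edgeSet → Bool // bsfP F' σ'} := by
  have hes : F'.edgeSet = F.edgeSet \ {s(w, v)} := by
    ext e
    induction e with
    | _ a b =>
      simp only [mem_edgeSet, hadj', Set.mem_diff, Set.mem_singleton_iff]
  have hmemd : ∀ E : Sym2 V, E ∈ F'.edgeSet → E ∈ F.edgeSet ∧ E ≠ s(w, v) := by
    intro E hE
    rw [hes] at hE
    exact ⟨hE.1, hE.2⟩
  have hmemd' : ∀ E : Sym2 V, E ∈ F.edgeSet → E ≠ s(w, v) → E ∈ F'.edgeSet := by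
    intro E h1 h2
    rw [hes]
    exact ⟨h1, h2⟩
  have hmem3 : ∀ (x : V), F.degree x = 3 → ∀ (e : F.edgeSet), x ∈ (e : Sym2 V) →
      (e : Sym2 V) ∈ F'.edgeSet := by
    intro x hx3 e hxe
    refine hmemd' _ e.2 ?_
    intro heq
    rw [heq] at hxe
    rw [Sym2.mem_iff] at hxe
    rcases hxe with rfl | rfl
    · exact (hw3 x hx3).1 rfl
    · exact (hw3 x hx3).2 rfl
  have hcongr : Nat.card {σ : F.edgeSet → Bool // bsfP F σ}
      = Nat.card (Bool × {σ' : F'.edgeSet → Bool // bsfP F' σ'}) := by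
    apply Nat.card_congr
    refine ⟨fun σ => (σ.1 ⟨s(w, v), hvw⟩,
        ⟨fun e' => σ.1 ⟨e'.1, (hmemd e'.1 e'.2).1⟩, ?_⟩),
      fun p => ⟨fun e => if h : (e : Sym2 V) = s(w, v) then p.1
        else p.2.1 ⟨e.1, hmemd' e.1 e.2 h⟩, ?_⟩, ?_, ?_⟩
    · -- forward property
      intro x hx3'
      have hx3 : F.degree x = 3 := (hdeg3 x).mpr hx3'
      obtain ⟨e₁, e₂, h1, h2, hne⟩ := σ.2 x hx3
      refine ⟨⟨e₁.1, hmem3 x hx3 e₁ h1⟩, ⟨e₂.1, hmem3 x hx3 e₂ h2⟩, h1, h2, ?_⟩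
      dsimp only
      exact fun heq => hne ((congrArg σ.1 (Subtype.ext rfl)).trans
        (heq.trans (congrArg σ.1 (Subtype.ext rfl))))
    · -- backward property
      intro x hx3
      obtain ⟨e₁', e₂', h1, h2, hne⟩ := p.2.2 x ((hdeg3 x).mp hx3)
      refine ⟨⟨e₁'.1, (hmemd e₁'.1 e₁'.2).1⟩, ⟨e₂'.1, (hmemd e₂'.1 e₂'.2).1⟩, h1, h2, ?_⟩
      dsimp only
      rw [dif_neg (hmemd e₁'.1 e₁'.2).2, dif_neg (hmemd e₂'.1 e₂'.2).2]
      exact fun heq => hne ((congrArg p.2.1 (Subtype.ext rfl)).trans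
        (heq.trans (congrArg p.2.1 (Subtype.ext rfl))))
    · -- left inverse
      intro σ
      apply Subtype.ext
      funext e
      dsimp only
      by_cases h : (e : Sym2 V) = s(w, v)
      · rw [dif_pos h]
        exact congrArg σ.1 (Subtype.ext h.symm)
      · rw [dif_neg h]
    · -- right inverse
      intro p
      refine Prod.ext ?_ ?_
      · dsimp only
        rw [dif_pos rfl]
      · apply Subtype.ext
        funext e'
        dsimp only
        rw [dif_neg (hmemd e'.1 e'.2).2]
  rw [hcongr, Nat.card_prod]
  simp

lemma bsf_count_three {F F' : SimpleGraph V} [DecidableRel F.Adj] [DecidableRel F'.Adj]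
    {w v u t : V} (hvw : F.Adj w v) (huw : F.Adj w u) (htw : F.Adj w t)
    (hvu : v ≠ u) (htv : t ≠ v) (htu : t ≠ u)
    (hnbr : F.neighborFinset w = {v, u, t})
    (hadj' : ∀ x y, F'.Adj x y ↔ (F.Adj x y ∧ s(x, y) ≠ s(w, v) ∧ s(x, y) ≠ s(w, u)))
    (hdeg3 : ∀ x, x ≠ w → (F.degree x = 3 ↔ F'.degree x = 3))
    (hw3' : F'.degree w ≠ 3)
    (hw3 : F.degree w = 3)
    (hleaf : ∀ x, F.degree x = 3 → x ≠ v ∧ x ≠ u) :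
    Nat.card {σ : F.edgeSet → Bool // bsfP F σ}
      = 3 * Nat.card {σ' : F'.edgeSet → Bool // bsfP F' σ'} := by
  have hes : F'.edgeSet = F.edgeSet \ {s(w, v), s(w, u)} := by
    ext e
    induction e with
    | _ a b =>
      simp only [mem_edgeSet, hadj', Set.mem_diff, Set.mem_insert_iff,
        Set.mem_singleton_iff, not_or]
  have hmemd : ∀ E : Sym2 V, E ∈ F'.edgeSet →
      E ∈ F.edgeSet ∧ E ≠ s(w, v) ∧ E ≠ s(w, u) := by
    intro E hE
    rw [hes] at hE
    exact ⟨hE.1, fun h => hE.2 (Or.inl h), fun h => hE.2 (Or.inr h)⟩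
  have hmemd' : ∀ E : Sym2 V, E ∈ F.edgeSet → E ≠ s(w, v) → E ≠ s(w, u) →
      E ∈ F'.edgeSet := by
    intro E h1 h2 h3
    rw [hes]
    exact ⟨h1, fun h => by rcases h with h | h; exact h2 h; exact h3 h⟩
  have hwt1 : s(w, t) ≠ s(w, v) := by
    intro h
    rw [Sym2.eq_iff] at h
    rcases h with ⟨-, h⟩ | ⟨h, -⟩
    · exact htv h
    · exact hvw.ne h
  have hwt2 : s(w, t) ≠ s(w, u) := by
    intro h
    rw [Sym2.eq_iff] at h
    rcases h with ⟨-, h⟩ | ⟨h, -⟩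
    · exact htu h
    · exact huw.ne h
  have hwvu : s(w, v) ≠ s(w, u) := by
    intro h
    rw [Sym2.eq_iff] at h
    rcases h with ⟨-, h⟩ | ⟨h, -⟩
    · exact hvu h
    · exact huw.ne h
  set E₁ : F.edgeSet := ⟨s(w, v), hvw⟩
  set E₂ : F.edgeSet := ⟨s(w, u), huw⟩
  set E₃ : F.edgeSet := ⟨s(w, t), htw⟩
  set E₃' : F'.edgeSet := ⟨s(w, t), hmemd' _ htw hwt1 hwt2⟩
  -- classification of edges at w
  have hclass : ∀ (e : F.edgeSet), w ∈ (e : Sym2 V) → e = E₁ ∨ e = E₂ ∨ e = E₃ := by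
    rintro ⟨e, he⟩ hwe
    obtain ⟨y, rfl⟩ := Sym2.mem_iff_exists.mp hwe
    have hy : y ∈ F.neighborFinset w := by
      rw [mem_neighborFinset]; exact he
    rw [hnbr] at hy
    simp only [Finset.mem_insert, Finset.mem_singleton] at hy
    rcases hy with rfl | rfl | rfl
    · exact Or.inl rfl
    · exact Or.inr (Or.inl rfl)
    · exact Or.inr (Or.inr rfl)
  -- vertices x ≠ w with F.degree 3 have all incident edges in F'
  have hmem3 : ∀ (x : V), F.degree x = 3 → x ≠ w → ∀ (e : F.edgeSet), x ∈ (e : Sym2 V) →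
      (e : Sym2 V) ∈ F'.edgeSet := by
    intro x hx3 hxw e hxe
    refine hmemd' _ e.2 ?_ ?_
    · intro heq
      rw [heq, Sym2.mem_iff] at hxe
      rcases hxe with rfl | rfl
      · exact hxw rfl
      · exact (hleaf x hx3).1 rfl
    · intro heq
      rw [heq, Sym2.mem_iff] at hxe
      rcases hxe with rfl | rfl
      · exact hxw rfl
      · exact (hleaf x hx3).2 rfl
  have hcongr : Nat.card {σ : F.edgeSet → Bool // bsfP F σ}
      = Nat.card ({q : Bool × Bool // q ≠ (false, false)}
          × {σ' : F'.edgeSet → Bool // bsfP F' σ'}) := by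
    apply Nat.card_congr
    refine ⟨fun σ => (⟨(xor (σ.1 E₁) (σ.1 E₃), xor (σ.1 E₂) (σ.1 E₃)), ?_⟩,
        ⟨fun e' => σ.1 ⟨e'.1, (hmemd e'.1 e'.2).1⟩, ?_⟩),
      fun p => ⟨fun e => if h1 : (e : Sym2 V) = s(w, v) then xor p.1.1.1 (p.2.1 E₃')
        else if h2 : (e : Sym2 V) = s(w, u) then xor p.1.1.2 (p.2.1 E₃')
        else p.2.1 ⟨e.1, hmemd' e.1 e.2 h1 h2⟩, ?_⟩, ?_, ?_⟩
    · -- the pair is not (false, false)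
      intro hff
      rw [Prod.mk.injEq] at hff
      have h13 : σ.1 E₁ = σ.1 E₃ := by
        have := hff.1
        cases hb1 : σ.1 E₁ <;> cases hb3 : σ.1 E₃ <;> simp_all
      have h23 : σ.1 E₂ = σ.1 E₃ := by
        have := hff.2
        cases hb2 : σ.1 E₂ <;> cases hb3 : σ.1 E₃ <;> simp_all
      obtain ⟨d₁, d₂, hd1, hd2, hdne⟩ := σ.2 w hw3
      have hv1 : σ.1 d₁ = σ.1 E₃ := by
        rcases hclass d₁ hd1 with rfl | rfl | rfl
        · exact h13
        · exact h23
        · rfl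
      have hv2 : σ.1 d₂ = σ.1 E₃ := by
        rcases hclass d₂ hd2 with rfl | rfl | rfl
        · exact h13
        · exact h23
        · rfl
      exact hdne (hv1.trans hv2.symm)
    · -- forward property
      intro x hx3'
      have hxw : x ≠ w := fun h => hw3' (h ▸ hx3')
      have hx3 : F.degree x = 3 := (hdeg3 x hxw).mpr hx3'
      obtain ⟨e₁, e₂, h1, h2, hne⟩ := σ.2 x hx3
      exact ⟨⟨e₁.1, hmem3 x hx3 hxw e₁ h1⟩, ⟨e₂.1, hmem3 x hx3 hxw e₂ h2⟩, h1, h2, hne⟩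
    · -- backward property
      intro x hx3
      by_cases hxw : x = w
      · -- x = w : use E₁ and E₃ or E₂ and E₃
        rcases hb1 : p.1.1.1 with _ | _
        · rcases hb2 : p.1.1.2 with _ | _
          · exfalso
            apply p.1.2
            rw [Prod.ext_iff]
            exact ⟨hb1, hb2⟩
          · refine ⟨E₂, E₃, by rw [hxw]; exact Sym2.mem_mk_left w u,
              by rw [hxw]; exact Sym2.mem_mk_left w t, ?_⟩
            dsimp only
            rw [dif_neg hwvu.symm, dif_pos rfl, dif_neg hwt1, dif_neg hwt2]
            exact bsf_bool2 _
        · refine ⟨E₁, E₃, by rw [hxw]; exact Sym2.mem_mk_left w v,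
            by rw [hxw]; exact Sym2.mem_mk_left w t, ?_⟩
          dsimp only
          rw [dif_pos rfl, dif_neg hwt1, dif_neg hwt2]
          exact bsf_bool2 _
      · -- x ≠ w
        obtain ⟨e₁', e₂', h1, h2, hne⟩ := p.2.2 x ((hdeg3 x hxw).mp hx3)
        refine ⟨⟨e₁'.1, (hmemd e₁'.1 e₁'.2).1⟩, ⟨e₂'.1, (hmemd e₂'.1 e₂'.2).1⟩, h1, h2, ?_⟩
        dsimp only
        rw [dif_neg (hmemd e₁'.1 e₁'.2).2.1, dif_neg (hmemd e₁'.1 e₁'.2).2.2,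
          dif_neg (hmemd e₂'.1 e₂'.2).2.1, dif_neg (hmemd e₂'.1 e₂'.2).2.2]
        exact hne
    · -- left inverse
      intro σ
      apply Subtype.ext
      funext e
      dsimp only
      by_cases h1 : (e : Sym2 V) = s(w, v)
      · rw [dif_pos h1]
        have he : e = E₁ := Subtype.ext h1
        subst he
        exact bsf_bool1 _ _
      · rw [dif_neg h1]
        by_cases h2 : (e : Sym2 V) = s(w, u)
        · rw [dif_pos h2]
          have he : e = E₂ := Subtype.ext h2
          subst he
          exact bsf_bool1 _ _
        · rw [dif_neg h2]
    · -- right inverse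
      intro p
      refine Prod.ext (Subtype.ext ?_) (Subtype.ext ?_)
      · dsimp only
        rw [dif_pos rfl, dif_neg hwvu.symm, dif_pos rfl, dif_neg hwt1, dif_neg hwt2]
        exact Prod.ext (bsf_bool1 _ _) (bsf_bool1 _ _)
      · funext e'
        dsimp only
        rw [dif_neg (hmemd e'.1 e'.2).2.1, dif_neg (hmemd e'.1 e'.2).2.2]
  rw [hcongr, Nat.card_prod]
  have : Nat.card {q : Bool × Bool // q ≠ (false, false)} = 3 := by
    rw [Nat.card_eq_fintype_card]
    decide
  rw [this]

lemma bsf_deg_le {F F' : SimpleGraph V} [DecidableRel F.Adj] [DecidableRel F'.Adj]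
    (hle : F' ≤ F) (x : V) : F'.degree x ≤ F.degree x := by
  apply Finset.card_le_card
  intro y hy
  rw [mem_neighborFinset] at hy ⊢
  exact hle hy

lemma bsf_card_lt {F F' : SimpleGraph V} [DecidableRel F.Adj] [DecidableRel F'.Adj]
    {w v : V} (hsub : F'.edgeSet ⊆ F.edgeSet \ {s(w, v)}) (hmem : s(w, v) ∈ F.edgeSet) :
    F'.edgeFinset.card < F.edgeFinset.card := by
  have h1 : F'.edgeFinset ⊆ F.edgeFinset.erase s(w, v) := by
    intro e he
    rw [mem_edgeFinset] at he
    have := hsub he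
    rw [Finset.mem_erase, mem_edgeFinset]
    exact ⟨this.2, this.1⟩
  calc F'.edgeFinset.card ≤ (F.edgeFinset.erase s(w, v)).card := Finset.card_le_card h1
    _ < F.edgeFinset.card := by
        apply Finset.card_erase_lt_of_mem
        rw [mem_edgeFinset]
        exact hmem

lemma bsf_two_comp {F : SimpleGraph V} [DecidableRel F.Adj] {v w : V}
    (hv1 : F.neighborFinset v = {w}) (hw1 : F.neighborFinset w = {v}) :
    ∀ (x y : V) (_ : F.Walk x y), x = v ∨ x = w → y = v ∨ y = w := by
  intro x y p
  induction p with
  | nil => exact fun h => h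
  | @cons a b c hadj q ih =>
    intro hx
    apply ih
    rcases hx with rfl | rfl
    · have hb : b ∈ F.neighborFinset a := by rw [mem_neighborFinset]; exact hadj
      rw [hv1, Finset.mem_singleton] at hb
      exact Or.inr hb
    · have hb : b ∈ F.neighborFinset a := by rw [mem_neighborFinset]; exact hadj
      rw [hw1, Finset.mem_singleton] at hb
      exact Or.inl hb

lemma bsf_base {F : SimpleGraph V} [DecidableRel F.Adj] (hempty : F.edgeFinset = ∅) :
    Nat.card {σ : F.edgeSet → Bool // bsfP F σ}
      = 2 ^ ({v | F.degree v = 2}.ncard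
          + {C : F.ConnectedComponent |
              ∃ v w, F.Adj v w ∧ F.connectedComponentMk v = C}.ncard)
        * 3 ^ {v | F.degree v = 3}.ncard := by
  have hes : F.edgeSet = ∅ := by
    rw [← Set.coe_toFinset F.edgeSet]
    rw [show F.edgeSet.toFinset = F.edgeFinset from rfl, hempty]
    simp
  have hnoadj : ∀ x y : V, ¬F.Adj x y := by
    intro x y h
    rw [← mem_edgeSet, hes] at h
    exact h
  have hdeg : ∀ x, F.degree x = 0 := by
    intro x
    have hnf : F.neighborFinset x = ∅ := by
      ext y
      simp only [mem_neighborFinset, Finset.notMem_empty, iff_false]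
      exact hnoadj x y
    exact Finset.card_eq_zero.mpr hnf
  haveI : IsEmpty F.edgeSet := by
    rw [hes]
    exact Set.isEmpty_coe_sort.mpr rfl
  haveI : Unique {σ : F.edgeSet → Bool // bsfP F σ} := by
    refine ⟨⟨⟨fun e => isEmptyElim e, ?_⟩⟩, ?_⟩
    · intro x hx
      rw [hdeg x] at hx
      exact absurd hx (by norm_num)
    · intro a
      apply Subtype.ext
      funext e
      exact isEmptyElim e
  rw [Nat.card_unique]
  have h2 : {v | F.degree v = 2} = ∅ := by
    ext x; simp [hdeg x]
  have h3 : {v | F.degree v = 3} = ∅ := by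
    ext x; simp [hdeg x]
  have hcset : {C : F.ConnectedComponent |
      ∃ v w, F.Adj v w ∧ F.connectedComponentMk v = C} = ∅ := by
    ext C
    simp only [Set.mem_setOf_eq, Set.mem_empty_iff_false, iff_false]
    rintro ⟨a, b, hab, -⟩
    exact hnoadj a b hab
  rw [h2, h3, hcset]
  simp

lemma bsf_main : ∀ (n : ℕ) (F : SimpleGraph V) [instF : DecidableRel F.Adj],
    F.edgeFinset.card ≤ n → F.IsAcyclic → (∀ x, F.degree x ≤ 3) →
    Nat.card {σ : F.edgeSet → Bool // bsfP F σ}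
      = 2 ^ ({v | F.degree v = 2}.ncard
          + {C : F.ConnectedComponent |
              ∃ v w, F.Adj v w ∧ F.connectedComponentMk v = C}.ncard)
        * 3 ^ {v | F.degree v = 3}.ncard := by
  intro n
  induction n with
  | zero =>
    intro F instF hcard _ _
    exact bsf_base (Finset.card_eq_zero.mp (Nat.le_zero.mp hcard))
  | succ n ih =>
    intro F instF hcard hforest hdeg
    by_cases hne : F.edgeFinset.Nonempty
    case neg => exact bsf_base (Finset.not_nonempty_iff_eq_empty.mp hne)
    case pos =>
    obtain ⟨w, v, hadj, hv1, hfil⟩ := bsf_exists_pendant F hforest hne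
    have hvmem : v ∈ F.neighborFinset w := by rw [mem_neighborFinset]; exact hadj
    have hdegw_pos : 1 ≤ F.degree w := by
      have : 0 < (F.neighborFinset w).card := Finset.card_pos.mpr ⟨v, hvmem⟩
      exact this
    have hdegw_le : F.degree w ≤ 3 := hdeg w
    have nb_v : F.neighborFinset v = {w} := bsf_nf_singleton hv1 hadj.symm
    interval_cases hdw : F.degree w
    · -- degree w = 1
      set D : Set (Sym2 V) := {s(w, v)} with hD
      set F' := F.deleteEdges D with hF'
      haveI instF' : DecidableRel F'.Adj := fun a b =>
        decidable_of_iff (F.Adj a b ∧ ¬(s(a, b) = s(w, v)))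
          (by rw [hF']; simp [hD, deleteEdges_adj])
      have hadj'1 : ∀ x y, F'.Adj x y ↔ (F.Adj x y ∧ s(x, y) ≠ s(w, v)) := by
        intro x y; rw [hF']; simp [hD, deleteEdges_adj]
      have hadj'L : ∀ x y, F'.Adj x y ↔
          (F.Adj x y ∧ ¬∃ z ∈ ({v} : Finset V), s(x, y) = s(w, z)) := by
        intro x y; rw [hadj'1]; simp
      have hL : ∀ z ∈ ({v} : Finset V), F.Adj w z ∧ F.degree z = 1 := by
        simp [hadj, hv1]
      have hle : F' ≤ F := bsf_le hadj'L
      have nb_w : F.neighborFinset w = {v} := bsf_nf_singleton hdw hadj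
      have nf'_v : F'.neighborFinset v = ∅ :=
        bsf_nf_leaf hL hadj'L (Finset.mem_singleton_self v)
      have nf'_w : F'.neighborFinset w = ∅ := by
        rw [bsf_nf_w hadj'L, nb_w]; simp
      have deg'_v : F'.degree v = 0 := Finset.card_eq_zero.mpr nf'_v
      have deg'_w : F'.degree w = 0 := Finset.card_eq_zero.mpr nf'_w
      have deg'_eq : ∀ x, x ≠ w → x ≠ v → F'.degree x = F.degree x := by
        intro x hxw hxv
        exact congrArg Finset.card (bsf_nf_eq hadj'L x hxw (by simp [hxv]))
      have hsub : F'.edgeSet ⊆ F.edgeSet \ {s(w, v)} := by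
        intro e
        induction e with
        | _ a b =>
          intro he
          rw [mem_edgeSet, hadj'1] at he
          exact ⟨he.1, he.2⟩
      have hcard' : F'.edgeFinset.card ≤ n := by
        have := bsf_card_lt hsub hadj
        omega
      have hrec := ih F' hcard' (bsf_acyclic hle hforest)
        (fun x => le_trans (bsf_deg_le hle x) (hdeg x))
      have deg3iff : ∀ x, F.degree x = 3 ↔ F'.degree x = 3 := by
        intro x
        by_cases hxw : x = w
        · subst hxw; rw [hdw, deg'_w]; norm_num
        by_cases hxv : x = v
        · subst hxv; rw [hv1, deg'_v]; norm_num
        · rw [deg'_eq x hxw hxv]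
      have hw3 : ∀ x, F.degree x = 3 → x ≠ w ∧ x ≠ v := by
        intro x h
        constructor
        · rintro rfl; rw [hdw] at h; norm_num at h
        · rintro rfl; rw [hv1] at h; norm_num at h
      have hcount := bsf_count_one hadj hadj'1 deg3iff hw3
      have hset2 : {x | F.degree x = 2} = {x | F'.degree x = 2} := by
        ext x
        simp only [Set.mem_setOf_eq]
        by_cases hxw : x = w
        · subst hxw; rw [hdw, deg'_w]; norm_num
        by_cases hxv : x = v
        · subst hxv; rw [hv1, deg'_v]; norm_num
        · rw [deg'_eq x hxw hxv]
      have hset3 : {x | F.degree x = 3} = {x | F'.degree x = 3} := by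
        ext x
        exact deg3iff x
      have hiso' : ∀ x, F.Reachable x v → x = v ∨ x = w := by
        intro x hx
        obtain ⟨p⟩ := hx.symm
        exact bsf_two_comp nb_v nb_w v x p (Or.inl rfl)
      have hnonisoL : ∀ x : V, (∃ x', F'.Adj x x') → x ∉ ({v} : Finset V) := by
        rintro x ⟨x', hx'⟩ hmem
        rw [Finset.mem_singleton] at hmem
        subst hmem
        have : x' ∈ F'.neighborFinset x := by rw [mem_neighborFinset]; exact hx'
        rw [nf'_v] at this
        exact absurd this (Finset.notMem_empty x')
      have hcomp := bsf_comp_succ hle hadj.symm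
        (fun x y hx hy hr => bsf_reach hL hadj'L (hnonisoL x hx) (hnonisoL y hy) hr)
        (by
          intro a b hab hnab
          have heq : s(a, b) = s(w, v) := by
            by_contra hc
            exact hnab ((hadj'1 a b).mpr ⟨hab, hc⟩)
          rw [Sym2.eq_iff] at heq
          rcases heq with ⟨rfl, rfl⟩ | ⟨rfl, rfl⟩
          · exact hadj.reachable
          · exact Reachable.refl _)
        (by
          intro x hx y hxy
          rcases hiso' x hx with rfl | rfl
          · have : y ∈ F'.neighborFinset x := by rw [mem_neighborFinset]; exact hxy
            rw [nf'_v] at this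
            exact absurd this (Finset.notMem_empty y)
          · have : y ∈ F'.neighborFinset x := by rw [mem_neighborFinset]; exact hxy
            rw [nf'_w] at this
            exact absurd this (Finset.notMem_empty y))
      rw [hcount, hrec, hset2, hset3, hcomp]
      ring
    · -- degree w = 2
      have hcardw : (F.neighborFinset w).card = 2 := hdw
      obtain ⟨t, htmem, htv⟩ :=
        Finset.exists_mem_ne (by omega : 1 < (F.neighborFinset w).card) v
      have htadj : F.Adj w t := (mem_neighborFinset F w t).mp htmem
      have hswtv : s(w, t) ≠ s(w, v) := by
        intro h
        rw [Sym2.eq_iff] at h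
        rcases h with ⟨-, h⟩ | ⟨h, -⟩
        · exact htv h
        · exact hadj.ne h
      set D : Set (Sym2 V) := {s(w, v)} with hD
      set F' := F.deleteEdges D with hF'
      haveI instF' : DecidableRel F'.Adj := fun a b =>
        decidable_of_iff (F.Adj a b ∧ ¬(s(a, b) = s(w, v)))
          (by rw [hF']; simp [hD, deleteEdges_adj])
      have hadj'1 : ∀ x y, F'.Adj x y ↔ (F.Adj x y ∧ s(x, y) ≠ s(w, v)) := by
        intro x y; rw [hF']; simp [hD, deleteEdges_adj]
      have hadj'L : ∀ x y, F'.Adj x y ↔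
          (F.Adj x y ∧ ¬∃ z ∈ ({v} : Finset V), s(x, y) = s(w, z)) := by
        intro x y; rw [hadj'1]; simp
      have hL : ∀ z ∈ ({v} : Finset V), F.Adj w z ∧ F.degree z = 1 := by
        simp [hadj, hv1]
      have hle : F' ≤ F := bsf_le hadj'L
      have nf'_v : F'.neighborFinset v = ∅ :=
        bsf_nf_leaf hL hadj'L (Finset.mem_singleton_self v)
      have deg'_v : F'.degree v = 0 := Finset.card_eq_zero.mpr nf'_v
      have deg'_w : F'.degree w = 1 := by
        show (F'.neighborFinset w).card = 1
        rw [bsf_nf_w hadj'L, Finset.card_sdiff_of_subset (Finset.singleton_subset_iff.mpr hvmem)]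
        simp [hcardw]
      have deg'_eq : ∀ x, x ≠ w → x ≠ v → F'.degree x = F.degree x := by
        intro x hxw hxv
        exact congrArg Finset.card (bsf_nf_eq hadj'L x hxw (by simp [hxv]))
      have hsub : F'.edgeSet ⊆ F.edgeSet \ {s(w, v)} := by
        intro e
        induction e with
        | _ a b =>
          intro he
          rw [mem_edgeSet, hadj'1] at he
          exact ⟨he.1, he.2⟩
      have hcard' : F'.edgeFinset.card ≤ n := by
        have := bsf_card_lt hsub hadj
        omega
      have hrec := ih F' hcard' (bsf_acyclic hle hforest)
        (fun x => le_trans (bsf_deg_le hle x) (hdeg x))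
      have deg3iff : ∀ x, F.degree x = 3 ↔ F'.degree x = 3 := by
        intro x
        by_cases hxw : x = w
        · subst hxw; rw [hdw, deg'_w]; norm_num
        by_cases hxv : x = v
        · subst hxv; rw [hv1, deg'_v]; norm_num
        · rw [deg'_eq x hxw hxv]
      have hw3 : ∀ x, F.degree x = 3 → x ≠ w ∧ x ≠ v := by
        intro x h
        constructor
        · rintro rfl; rw [hdw] at h; norm_num at h
        · rintro rfl; rw [hv1] at h; norm_num at h
      have hcount := bsf_count_one hadj hadj'1 deg3iff hw3
      have hset2 : {x | F.degree x = 2} = insert w {x | F'.degree x = 2} := by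
        ext x
        simp only [Set.mem_setOf_eq, Set.mem_insert_iff]
        by_cases hxw : x = w
        · subst hxw; simp [hdw]
        by_cases hxv : x = v
        · subst hxv; simp [hv1, deg'_v, hadj.ne']
        · simp [hxw, deg'_eq x hxw hxv]
      have hn2card : {x | F.degree x = 2}.ncard = {x | F'.degree x = 2}.ncard + 1 := by
        rw [hset2, Set.ncard_insert_of_notMem (by simp [deg'_w]) (Set.toFinite _)]
      have hset3 : {x | F.degree x = 3} = {x | F'.degree x = 3} := by
        ext x
        exact deg3iff x
      have hnonisoL : ∀ x : V, (∃ x', F'.Adj x x') → x ∉ ({v} : Finset V) := by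
        rintro x ⟨x', hx'⟩ hmem
        rw [Finset.mem_singleton] at hmem
        subst hmem
        have : x' ∈ F'.neighborFinset x := by rw [mem_neighborFinset]; exact hx'
        rw [nf'_v] at this
        exact absurd this (Finset.notMem_empty x')
      have hadj'wt : F'.Adj w t := (hadj'1 w t).mpr ⟨htadj, hswtv⟩
      have hcomp := bsf_comp_eq hle
        (fun x y hx hy hr => bsf_reach hL hadj'L (hnonisoL x hx) (hnonisoL y hy) hr)
        (by
          intro a b hab
          by_cases hab' : F'.Adj a b
          · exact ⟨a, b, hab', Reachable.refl a⟩
          · have heq : s(a, b) = s(w, v) := by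
              by_contra hc
              exact hab' ((hadj'1 a b).mpr ⟨hab, hc⟩)
            rw [Sym2.eq_iff] at heq
            rcases heq with ⟨rfl, rfl⟩ | ⟨rfl, rfl⟩
            · exact ⟨a, t, hadj'wt, Reachable.refl a⟩
            · exact ⟨b, t, hadj'wt, hadj.symm.reachable⟩)
      rw [hcount, hrec, hn2card, hset3, hcomp]
      ring
    · -- degree w = 3
      have hcardw : (F.neighborFinset w).card = 3 := hdw
      have hfilter2 : 2 ≤ ((F.neighborFinset w).filter (fun x => F.degree x = 1)).card := by
        have hsplit := Finset.card_filter_add_card_filter_not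
          (s := F.neighborFinset w) (p := fun x => F.degree x = 1)
        have hfil' : ((F.neighborFinset w).filter (fun x => ¬F.degree x = 1)).card ≤ 1 := hfil
        omega
      obtain ⟨u, huA, huv⟩ :=
        Finset.exists_mem_ne (by omega :
          1 < ((F.neighborFinset w).filter (fun x => F.degree x = 1)).card) v
      rw [Finset.mem_filter] at huA
      obtain ⟨humem, hu1⟩ := huA
      have huadj : F.Adj w u := (mem_neighborFinset F w u).mp humem
      have hvu : v ≠ u := huv.symm
      have hBcard : ((F.neighborFinset w) \ {v, u}).card = 1 := by
        rw [Finset.card_sdiff_of_subset (by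
          intro z hz
          rcases Finset.mem_insert.mp hz with rfl | hz2
          · exact hvmem
          · rw [Finset.mem_singleton] at hz2; subst hz2; exact humem)]
        rw [Finset.card_pair hvu, hcardw]
      obtain ⟨t, htB⟩ := Finset.card_pos.mp (by omega : 0 < ((F.neighborFinset w) \ {v, u}).card)
      rw [Finset.mem_sdiff, Finset.mem_insert, Finset.mem_singleton] at htB
      obtain ⟨htmem, htvu⟩ := htB
      push_neg at htvu
      obtain ⟨htv', htu'⟩ := htvu
      have htv : t ≠ v := htv'
      have htu : t ≠ u := htu'
      have htadj : F.Adj w t := (mem_neighborFinset F w t).mp htmem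
      have hvutcard : ({v, u, t} : Finset V).card = 3 := by
        rw [Finset.card_insert_of_notMem (by simp [hvu, htv.symm]),
          Finset.card_insert_of_notMem (by simp [htu.symm])]
        simp
      have hnbr : F.neighborFinset w = {v, u, t} := by
        refine (Finset.eq_of_subset_of_card_le ?_ ?_).symm
        · intro z hz
          rcases Finset.mem_insert.mp hz with rfl | hz2
          · exact hvmem
          rcases Finset.mem_insert.mp hz2 with rfl | hz3
          · exact humem
          rw [Finset.mem_singleton] at hz3
          subst hz3
          exact htmem
        · rw [hvutcard, hcardw]
      have hswtv : s(w, t) ≠ s(w, v) := by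
        intro h
        rw [Sym2.eq_iff] at h
        rcases h with ⟨-, h⟩ | ⟨h, -⟩
        · exact htv h
        · exact hadj.ne h
      have hswtu : s(w, t) ≠ s(w, u) := by
        intro h
        rw [Sym2.eq_iff] at h
        rcases h with ⟨-, h⟩ | ⟨h, -⟩
        · exact htu h
        · exact huadj.ne h
      set D : Set (Sym2 V) := {s(w, v), s(w, u)} with hD
      set F' := F.deleteEdges D with hF'
      haveI instF' : DecidableRel F'.Adj := fun a b =>
        decidable_of_iff (F.Adj a b ∧ ¬(s(a, b) = s(w, v) ∨ s(a, b) = s(w, u)))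
          (by rw [hF']; simp [hD, deleteEdges_adj])
      have hadj'1 : ∀ x y, F'.Adj x y ↔
          (F.Adj x y ∧ s(x, y) ≠ s(w, v) ∧ s(x, y) ≠ s(w, u)) := by
        intro x y; rw [hF']; simp [hD, deleteEdges_adj, not_or]
      have hadj'L : ∀ x y, F'.Adj x y ↔
          (F.Adj x y ∧ ¬∃ z ∈ ({v, u} : Finset V), s(x, y) = s(w, z)) := by
        intro x y
        rw [hadj'1]
        simp [not_or]
      have hL : ∀ z ∈ ({v, u} : Finset V), F.Adj w z ∧ F.degree z = 1 := by
        intro z hz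
        rcases Finset.mem_insert.mp hz with rfl | hz2
        · exact ⟨hadj, hv1⟩
        · rw [Finset.mem_singleton] at hz2; subst hz2; exact ⟨huadj, hu1⟩
      have hle : F' ≤ F := bsf_le hadj'L
      have nf'_v : F'.neighborFinset v = ∅ :=
        bsf_nf_leaf hL hadj'L (by simp)
      have nf'_u : F'.neighborFinset u = ∅ :=
        bsf_nf_leaf hL hadj'L (by simp)
      have deg'_v : F'.degree v = 0 := Finset.card_eq_zero.mpr nf'_v
      have deg'_u : F'.degree u = 0 := Finset.card_eq_zero.mpr nf'_u
      have hsdiff : F.neighborFinset w \ {v, u} = {t} := by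
        rw [hnbr]
        ext x
        simp only [Finset.mem_sdiff, Finset.mem_insert, Finset.mem_singleton]
        constructor
        · rintro ⟨rfl | rfl | rfl, h2⟩
          · exact absurd (Or.inl rfl) h2
          · exact absurd (Or.inr rfl) h2
          · rfl
        · rintro rfl
          exact ⟨Or.inr (Or.inr rfl), by push_neg; exact ⟨htv, htu⟩⟩
      have deg'_w : F'.degree w = 1 := by
        show (F'.neighborFinset w).card = 1
        rw [bsf_nf_w hadj'L, hsdiff]
        simp
      have deg'_eq : ∀ x, x ≠ w → x ≠ v → x ≠ u → F'.degree x = F.degree x := by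
        intro x hxw hxv hxu
        exact congrArg Finset.card (bsf_nf_eq hadj'L x hxw (by simp [hxv, hxu]))
      have hsub : F'.edgeSet ⊆ F.edgeSet \ {s(w, v)} := by
        intro e
        induction e with
        | _ a b =>
          intro he
          rw [mem_edgeSet, hadj'1] at he
          exact ⟨he.1, he.2.1⟩
      have hcard' : F'.edgeFinset.card ≤ n := by
        have := bsf_card_lt hsub hadj
        omega
      have hrec := ih F' hcard' (bsf_acyclic hle hforest)
        (fun x => le_trans (bsf_deg_le hle x) (hdeg x))
      have deg3iff : ∀ x, x ≠ w → (F.degree x = 3 ↔ F'.degree x = 3) := by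
        intro x hxw
        by_cases hxv : x = v
        · subst hxv; rw [hv1, deg'_v]; norm_num
        by_cases hxu : x = u
        · subst hxu; rw [hu1, deg'_u]; norm_num
        · rw [deg'_eq x hxw hxv hxu]
      have hw3' : F'.degree w ≠ 3 := by rw [deg'_w]; norm_num
      have hleaf : ∀ x, F.degree x = 3 → x ≠ v ∧ x ≠ u := by
        intro x h
        constructor
        · rintro rfl; rw [hv1] at h; norm_num at h
        · rintro rfl; rw [hu1] at h; norm_num at h
      have hcount := bsf_count_three hadj huadj htadj hvu htv htu hnbr hadj'1
        deg3iff hw3' hdw hleaf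
      have hset2 : {x | F.degree x = 2} = {x | F'.degree x = 2} := by
        ext x
        simp only [Set.mem_setOf_eq]
        by_cases hxw : x = w
        · subst hxw; rw [hdw, deg'_w]; norm_num
        by_cases hxv : x = v
        · subst hxv; rw [hv1, deg'_v]; norm_num
        by_cases hxu : x = u
        · subst hxu; rw [hu1, deg'_u]; norm_num
        · rw [deg'_eq x hxw hxv hxu]
      have hset3 : {x | F.degree x = 3} = insert w {x | F'.degree x = 3} := by
        ext x
        simp only [Set.mem_setOf_eq, Set.mem_insert_iff]
        by_cases hxw : x = w
        · subst hxw; simp [hdw]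
        · simp [hxw, deg3iff x hxw]
      have hn3card : {x | F.degree x = 3}.ncard = {x | F'.degree x = 3}.ncard + 1 := by
        rw [hset3, Set.ncard_insert_of_notMem (by simp [deg'_w]) (Set.toFinite _)]
      have hnonisoL : ∀ x : V, (∃ x', F'.Adj x x') → x ∉ ({v, u} : Finset V) := by
        rintro x ⟨x', hx'⟩ hmem
        have hmem' : x' ∈ F'.neighborFinset x := by rw [mem_neighborFinset]; exact hx'
        rcases Finset.mem_insert.mp hmem with rfl | hmem2
        · rw [nf'_v] at hmem'
          exact absurd hmem' (Finset.notMem_empty x')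
        · rw [Finset.mem_singleton] at hmem2
          subst hmem2
          rw [nf'_u] at hmem'
          exact absurd hmem' (Finset.notMem_empty x')
      have hadj'wt : F'.Adj w t := (hadj'1 w t).mpr ⟨htadj, hswtv, hswtu⟩
      have hcomp := bsf_comp_eq hle
        (fun x y hx hy hr => bsf_reach hL hadj'L (hnonisoL x hx) (hnonisoL y hy) hr)
        (by
          intro a b hab
          by_cases hab' : F'.Adj a b
          · exact ⟨a, b, hab', Reachable.refl a⟩
          · have heq : s(a, b) = s(w, v) ∨ s(a, b) = s(w, u) := by
              by_contra hc
              push_neg at hc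
              exact hab' ((hadj'1 a b).mpr ⟨hab, hc.1, hc.2⟩)
            rcases heq with heq | heq <;> rw [Sym2.eq_iff] at heq
            · rcases heq with ⟨rfl, rfl⟩ | ⟨rfl, rfl⟩
              · exact ⟨a, t, hadj'wt, Reachable.refl a⟩
              · exact ⟨b, t, hadj'wt, hadj.symm.reachable⟩
            · rcases heq with ⟨rfl, rfl⟩ | ⟨rfl, rfl⟩
              · exact ⟨a, t, hadj'wt, Reachable.refl a⟩
              · exact ⟨b, t, hadj'wt, huadj.symm.reachable⟩)
      rw [hcount, hrec, hset2, hn3card, hcomp]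
      ring

end BSFAux

/-- Let `F` be a finite forest (acyclic graph) with maximum degree at most `3`, having `n₂`
vertices of degree `2`, `n₃` vertices of degree `3`, and `c` connected components
containing at least one edge.  Then the number of balanced sign functions on the edges of
`F` (assignments of `+`/`−`, here `Bool`, such that no degree-3 vertex has all three
incident edges of the same sign) is `2 ^ (n₂ + c) * 3 ^ n₃`. -/
theorem balanced_sign_functions_forest (V : Type*) [Fintype V] [DecidableEq V]
    (F : SimpleGraph V) [DecidableRel F.Adj]
    (hforest : F.IsAcyclic)
    (hdeg : ∀ v, F.degree v ≤ 3)
    (n₂ n₃ c : ℕ)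
    (h2 : n₂ = {v | F.degree v = 2}.ncard)
    (h3 : n₃ = {v | F.degree v = 3}.ncard)
    (hc : c = {C : F.ConnectedComponent |
        ∃ v w, F.Adj v w ∧ F.connectedComponentMk v = C}.ncard) :
    Nat.card {σ : F.edgeSet → Bool //
        ∀ v, F.degree v = 3 →
          ∃ e₁ e₂ : F.edgeSet, v ∈ (e₁ : Sym2 V) ∧ v ∈ (e₂ : Sym2 V) ∧ σ e₁ ≠ σ e₂}
      = 2 ^ (n₂ + c) * 3 ^ n₃ := by
  subst h2 h3 hc
  exact bsf_main F.edgeFinset.card F le_rfl hforest hdeg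
end

section
/- Let W be a Coxeter group of cycle type on n ≥ 3 generators with all labels finite: its Coxeter diagram is an n-cycle with edge labels m₁,…,m_n ∈ {3,4,…} between consecutive generators, and non-consecutive generators commute. For a Cartan matrix A compatible with W, let C(A) = A_{12}A_{23}⋯A_{n1} and let C̄(A) be the product in the opposite cyclic order. Then C(A)·C̄(A) = ∏_{k=1}^{n} 4cos²(π/m_k), a constant depending only on W; and the map sending the equivalence class of A to the normalized cyclic product R(A) = log(C(A)/C̄(A)) is a bijection from equivalence classes of Cartan matrices compatible with W (with the cycle zero pattern) onto ℝ. -/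
/-- A Cartan matrix compatible with the cycle-type Coxeter group on `n` generators with
labels `m i ∈ {3, 4, …}` between consecutive generators (indices taken cyclically in
`Fin n`), non-consecutive generators commuting. -/
def CycleCompatible (n : ℕ) [NeZero n] (m : Fin n → ℕ)
    (A : Matrix (Fin n) (Fin n) ℝ) : Prop :=
  (∀ i, A i i = 2) ∧ (∀ i j, i ≠ j → A i j ≤ 0) ∧
  (∀ i : Fin n, A i (i + 1) * A (i + 1) i = 4 * Real.cos (Real.pi / (m i : ℝ)) ^ 2) ∧
  (∀ i j : Fin n, i ≠ j → j ≠ i + 1 → i ≠ j + 1 → A i j = 0)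

/-- The cyclic product `A_{12} A_{23} ⋯ A_{n1}` of a matrix along the standard cycle. -/
noncomputable def cycProd (n : ℕ) [NeZero n] (A : Matrix (Fin n) (Fin n) ℝ) : ℝ :=
  ∏ i : Fin n, A i (i + 1)

/-- The cyclic product of a matrix along the standard cycle, in the opposite order. -/
noncomputable def cycProdRev (n : ℕ) [NeZero n] (A : Matrix (Fin n) (Fin n) ℝ) : ℝ :=
  ∏ i : Fin n, A (i + 1) i

open Fin.NatCast in
lemma myAux.ne_add_one (n : ℕ) [NeZero n] (hn : 3 ≤ n) (i : Fin n) : i ≠ i + 1 := by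
  intro h
  have h1 : i + 0 = i + 1 := by rw [add_zero]; exact h
  have h2 : ((1:ℕ) : Fin n) = 0 := by
    have := (add_left_cancel h1).symm
    simpa using this
  have := Nat.le_of_dvd one_pos ((CharP.cast_eq_zero_iff (Fin n) n 1).mp h2)
  omega

open Fin.NatCast in
lemma myAux.ne_add_two (n : ℕ) [NeZero n] (hn : 3 ≤ n) (i : Fin n) : i ≠ i + 1 + 1 := by
  intro h
  have h1 : i + 0 = i + (1 + 1) := by rw [add_zero, ← add_assoc]; exact h
  have h2 : ((2:ℕ) : Fin n) = 0 := by
    have h3 : ((1:Fin n) + 1) = 0 := (add_left_cancel h1).symm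
    have h4 : ((2:ℕ) : Fin n) = 1 + 1 := by norm_num
    rw [h4, h3]
  have := Nat.le_of_dvd two_pos ((CharP.cast_eq_zero_iff (Fin n) n 2).mp h2)
  omega

lemma myAux.cos_pos (m : ℕ) (hm : 3 ≤ m) : 0 < Real.cos (Real.pi / (m : ℝ)) := by
  apply Real.cos_pos_of_mem_Ioo
  have hm' : (2:ℝ) < m := by exact_mod_cast (by omega : 2 < m)
  have hpi := Real.pi_pos
  constructor
  · have : 0 < Real.pi / m := by positivity
    linarith
  · exact div_lt_div_of_pos_left hpi two_pos hm'

lemma myAux.fourcos_pos (m : ℕ) (hm : 3 ≤ m) :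
    0 < 4 * Real.cos (Real.pi / (m : ℝ)) ^ 2 := by
  have := myAux.cos_pos m hm
  nlinarith

lemma myAux.entries_neg (n : ℕ) [NeZero n] (hn : 3 ≤ n) (m : Fin n → ℕ)
    (hm : ∀ i, 3 ≤ m i) (A : Matrix (Fin n) (Fin n) ℝ) (hA : CycleCompatible n m A)
    (i : Fin n) : A i (i + 1) < 0 ∧ A (i + 1) i < 0 := by
  obtain ⟨-, hle, hprod, -⟩ := hA
  have hne := myAux.ne_add_one n hn i
  have h1 : A i (i+1) ≤ 0 := hle _ _ hne
  have h2 : A (i+1) i ≤ 0 := hle _ _ (Ne.symm hne)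
  have hp : 0 < A i (i+1) * A (i+1) i := by
    rw [hprod i]; exact myAux.fourcos_pos (m i) (hm i)
  constructor <;> nlinarith

lemma myAux.part1 (n : ℕ) [NeZero n] (m : Fin n → ℕ)
    (A : Matrix (Fin n) (Fin n) ℝ) (hA : CycleCompatible n m A) :
    cycProd n A * cycProdRev n A = ∏ i : Fin n, 4 * Real.cos (Real.pi / (m i : ℝ)) ^ 2 := by
  rw [cycProd, cycProdRev, ← Finset.prod_mul_distrib]
  exact Finset.prod_congr rfl fun i _ => hA.2.2.1 i

lemma myAux.part3 (n : ℕ) [NeZero n] (hn : 3 ≤ n) (m : Fin n → ℕ) (hm : ∀ i, 3 ≤ m i)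
    (r : ℝ) : ∃ A, CycleCompatible n m A ∧
      Real.log (cycProd n A / cycProdRev n A) = r := by
  set t : ℝ := Real.exp (r / (2 * n)) with ht_def
  have ht : 0 < t := Real.exp_pos _
  set c : Fin n → ℝ := fun i => 2 * Real.cos (Real.pi / (m i : ℝ)) with hc_def
  have hc : ∀ i, 0 < c i := fun i => by
    have := myAux.cos_pos (m i) (hm i); simp only [hc_def]; positivity
  set A : Matrix (Fin n) (Fin n) ℝ := fun i j =>
    if i = j then 2 else if j = i + 1 then -(c i) * t else if i = j + 1 then -(c j) / t
    else 0 with hA_def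
  have hA1 : ∀ i, A i (i + 1) = -(c i) * t := by
    intro i
    simp only [hA_def]
    rw [if_neg (myAux.ne_add_one n hn i)]
    simp
  have hA2 : ∀ i, A (i + 1) i = -(c i) / t := by
    intro i
    simp only [hA_def]
    rw [if_neg (fun h => myAux.ne_add_one n hn i h.symm),
      if_neg (myAux.ne_add_two n hn i)]
    simp
  have hcomp : CycleCompatible n m A := by
    refine ⟨fun i => by simp [hA_def], ?_, ?_, ?_⟩
    · intro i j hij
      simp only [hA_def]
      rw [if_neg hij]
      split_ifs
      · nlinarith [hc i]
      · have := hc j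
        have : 0 < c j / t := by positivity
        rw [neg_div]
        linarith
      · exact le_refl 0
    · intro i
      rw [hA1 i, hA2 i]
      have : -(c i) * t * (-(c i) / t) = c i ^ 2 := by field_simp
      rw [this, hc_def]
      ring
    · intro i j h1 h2 h3
      simp only [hA_def]
      rw [if_neg h1, if_neg h2, if_neg h3]
  refine ⟨A, hcomp, ?_⟩
  have hP : (∏ i : Fin n, -(c i)) ≠ 0 :=
    Finset.prod_ne_zero_iff.mpr fun i _ => by have := hc i; intro h; nlinarith
  have hCP : cycProd n A = (∏ i : Fin n, -(c i)) * t ^ n := by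
    rw [cycProd]
    rw [Finset.prod_congr rfl fun i _ => hA1 i, Finset.prod_mul_distrib,
      Finset.prod_const, Finset.card_fin]
  have hCR : cycProdRev n A = (∏ i : Fin n, -(c i)) / t ^ n := by
    rw [cycProdRev]
    rw [Finset.prod_congr rfl fun i _ => hA2 i, Finset.prod_div_distrib,
      Finset.prod_const, Finset.card_fin]
  rw [hCP, hCR]
  have htn : t ^ n ≠ 0 := by positivity
  have hratio : (∏ i : Fin n, -(c i)) * t ^ n / ((∏ i : Fin n, -(c i)) / t ^ n)
      = t ^ (2 * n) := by
    field_simp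
    ring
  rw [hratio, Real.log_pow, ht_def, Real.log_exp]
  have hn0 : (n : ℝ) ≠ 0 := by
    have : n ≠ 0 := by omega
    exact_mod_cast this
  push_cast
  field_simp

lemma myAux.forward (n : ℕ) [NeZero n] (A A' : Matrix (Fin n) (Fin n) ℝ)
    (d : Fin n → ℝ) (hd : ∀ i, 0 < d i)
    (hEq : A' = Matrix.diagonal d * A * Matrix.diagonal fun i => (d i)⁻¹) :
    cycProd n A' = cycProd n A ∧ cycProdRev n A' = cycProdRev n A := by
  have hentry : ∀ i j, A' i j = d i * A i j * (d j)⁻¹ := by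
    intro i j
    rw [hEq, Matrix.mul_diagonal, Matrix.diagonal_mul]
  have hperm : ∏ i : Fin n, d (i + 1) = ∏ i : Fin n, d i :=
    Equiv.prod_comp (Equiv.addRight (1 : Fin n)) d
  have hdnz : (∏ i : Fin n, d i) ≠ 0 :=
    Finset.prod_ne_zero_iff.mpr fun i _ => (hd i).ne'
  constructor
  · calc cycProd n A' = ∏ i : Fin n, d i * A i (i+1) * (d (i+1))⁻¹ :=
          Finset.prod_congr rfl fun i _ => hentry i (i+1)
      _ = (∏ i : Fin n, d i) * (∏ i : Fin n, A i (i+1)) * (∏ i : Fin n, d (i+1))⁻¹ := by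
          rw [Finset.prod_mul_distrib, Finset.prod_mul_distrib, Finset.prod_inv_distrib]
      _ = cycProd n A := by rw [hperm, cycProd]; field_simp; try ring
  · calc cycProdRev n A' = ∏ i : Fin n, d (i+1) * A (i+1) i * (d i)⁻¹ :=
          Finset.prod_congr rfl fun i _ => hentry (i+1) i
      _ = (∏ i : Fin n, d (i+1)) * (∏ i : Fin n, A (i+1) i) * (∏ i : Fin n, d i)⁻¹ := by
          rw [Finset.prod_mul_distrib, Finset.prod_mul_distrib, Finset.prod_inv_distrib]
      _ = cycProdRev n A := by rw [hperm, cycProdRev]; field_simp; try ring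

open Fin.NatCast in
lemma myAux.part2back (n : ℕ) [NeZero n] (hn : 3 ≤ n) (m : Fin n → ℕ)
    (hm : ∀ i, 3 ≤ m i) (A A' : Matrix (Fin n) (Fin n) ℝ)
    (hA : CycleCompatible n m A) (hA' : CycleCompatible n m A')
    (hlog : Real.log (cycProd n A / cycProdRev n A)
      = Real.log (cycProd n A' / cycProdRev n A')) :
    ∃ d : Fin n → ℝ, (∀ i, 0 < d i) ∧
      A' = Matrix.diagonal d * A * Matrix.diagonal fun i => (d i)⁻¹ := by
  have negA := myAux.entries_neg n hn m hm A hA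
  have negA' := myAux.entries_neg n hn m hm A' hA'
  set a := cycProd n A with ha_def
  set b := cycProdRev n A with hb_def
  set a' := cycProd n A' with ha'_def
  set b' := cycProdRev n A' with hb'_def
  have ha : a ≠ 0 := Finset.prod_ne_zero_iff.mpr fun i _ => (negA i).1.ne
  have hb : b ≠ 0 := Finset.prod_ne_zero_iff.mpr fun i _ => (negA i).2.ne
  have ha' : a' ≠ 0 := Finset.prod_ne_zero_iff.mpr fun i _ => (negA' i).1.ne
  have hb' : b' ≠ 0 := Finset.prod_ne_zero_iff.mpr fun i _ => (negA' i).2.ne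
  have hK : (0:ℝ) < ∏ i : Fin n, 4 * Real.cos (Real.pi / (m i : ℝ)) ^ 2 :=
    Finset.prod_pos fun i _ => myAux.fourcos_pos (m i) (hm i)
  have hab : a * b = ∏ i : Fin n, 4 * Real.cos (Real.pi / (m i : ℝ)) ^ 2 :=
    myAux.part1 n m A hA
  have hab' : a' * b' = ∏ i : Fin n, 4 * Real.cos (Real.pi / (m i : ℝ)) ^ 2 :=
    myAux.part1 n m A' hA'
  have hpos : 0 < a / b := by
    have h1 : a / b = (a * b) / b ^ 2 := by field_simp
    have h2 : 0 < b ^ 2 := lt_of_le_of_ne (sq_nonneg b) (Ne.symm (pow_ne_zero 2 hb))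
    rw [h1, hab]; exact div_pos hK h2
  have hpos' : 0 < a' / b' := by
    have h1 : a' / b' = (a' * b') / b' ^ 2 := by field_simp
    have h2 : 0 < b' ^ 2 := lt_of_le_of_ne (sq_nonneg b') (Ne.symm (pow_ne_zero 2 hb'))
    rw [h1, hab']; exact div_pos hK h2
  have hratio : a / b = a' / b' := by
    rw [← Real.exp_log hpos, ← Real.exp_log hpos', hlog]
  -- the quotient of forward cyclic products is 1
  set ρ : Fin n → ℝ := fun i => A i (i+1) / A' i (i+1) with hρ_def
  have hρpos : ∀ i, 0 < ρ i := fun i =>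
    div_pos_of_neg_of_neg (negA i).1 (negA' i).1
  have hρprod : ∏ i : Fin n, ρ i = a / a' := by
    rw [ha_def, ha'_def]
    unfold cycProd
    rw [hρ_def]
    exact Finset.prod_div_distrib _ _
  have hsq : a ^ 2 = a' ^ 2 := by
    calc a ^ 2 = (a / b) * (a * b) := by field_simp
      _ = (a' / b') * (a' * b') := by rw [hratio, hab, hab']
      _ = a' ^ 2 := by field_simp
  have haa' : a / a' = 1 := by
    have hx : (a / a') * (a / a') = 1 := by
      rw [div_mul_div_comm, ← sq, ← sq, hsq, div_self (pow_ne_zero 2 ha')]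
    have hxpos : 0 < a / a' := hρprod ▸ Finset.prod_pos fun i _ => hρpos i
    rcases mul_self_eq_one_iff.mp hx with h | h
    · exact h
    · linarith [hxpos, h ▸ hxpos]
  have hρ1 : ∏ i : Fin n, ρ i = 1 := hρprod.trans haa'
  -- construct the diagonal
  set d : Fin n → ℝ := fun i => ∏ k ∈ Finset.range i.val, ρ ((k : ℕ) : Fin n) with hd_def
  have hdpos : ∀ i, 0 < d i := fun i => Finset.prod_pos fun k _ => hρpos _
  have hstep : ∀ i : Fin n, d (i + 1) = d i * ρ i := by
    intro i
    have h1n : 1 % n = 1 := Nat.mod_eq_of_lt (by omega)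
    have hiv : (i + 1).val = (i.val + 1) % n := by
      rw [Fin.val_add, Fin.val_one', h1n]
    by_cases hlt : i.val + 1 < n
    · have hv : (i+1).val = i.val + 1 := by rw [hiv, Nat.mod_eq_of_lt hlt]
      show (∏ k ∈ Finset.range (i+1).val, ρ ((k : ℕ) : Fin n)) = _
      rw [hv, Finset.prod_range_succ, Fin.cast_val_eq_self]
    · have hn' : i.val + 1 = n := by have := i.isLt; omega
      have h0 : (i+1).val = 0 := by rw [hiv, hn', Nat.mod_self]
      have h2 : d i * ρ i = ∏ k ∈ Finset.range (i.val + 1), ρ ((k : ℕ) : Fin n) := by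
        rw [Finset.prod_range_succ, Fin.cast_val_eq_self]
      have h3 : (∏ k ∈ Finset.range n, ρ ((k : ℕ) : Fin n)) = ∏ i : Fin n, ρ i := by
        rw [← Fin.prod_univ_eq_prod_range (fun k => ρ ((k : ℕ) : Fin n)) n]
        exact Finset.prod_congr rfl fun i _ => by rw [Fin.cast_val_eq_self]
      have h4 : d (i+1) = 1 := by
        show (∏ k ∈ Finset.range (i+1).val, ρ ((k : ℕ) : Fin n)) = 1
        rw [h0, Finset.range_zero, Finset.prod_empty]
      rw [h4, h2, hn', h3, hρ1]
  refine ⟨d, hdpos, ?_⟩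
  have hentry : ∀ i j, A' i j = d i * A i j * (d j)⁻¹ := by
    intro i j
    by_cases hij : i = j
    · subst hij
      rw [hA'.1 i, hA.1 i]
      field_simp [(hdpos i).ne']
    by_cases h2 : j = i + 1
    · subst h2
      rw [hstep i, hρ_def]
      have h1 := (negA i).1.ne
      have h1' := (negA' i).1.ne
      field_simp [(hdpos i).ne']
      try ring
    by_cases h3 : i = j + 1
    · subst h3
      have hpq : A' j (j+1) * A' (j+1) j = A j (j+1) * A (j+1) j := by
        rw [hA'.2.2.1 j, hA.2.2.1 j]
      have h1 := (negA j).1.ne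
      have h1' := (negA' j).1.ne
      have h4 : A' (j+1) j = A j (j+1) * A (j+1) j / A' j (j+1) := by
        rw [← hpq]; field_simp
      rw [h4, hstep j, hρ_def]
      field_simp [(hdpos j).ne', (hdpos (j+1)).ne']
      try ring
    · rw [hA'.2.2.2 i j hij h2 h3, hA.2.2.2 i j hij h2 h3]
      ring
  ext i j
  rw [hentry i j, Matrix.mul_diagonal, Matrix.diagonal_mul]

/-- For a Coxeter group of cycle type on `n ≥ 3` generators with all labels
`m i ∈ {3, 4, …}` finite: (1) for every compatible Cartan matrix `A`, the product of the
two cyclic products is the constant `∏ 4 cos²(π / m i)` depending only on the group;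
(2) two compatible Cartan matrices are equivalent (conjugate by a positive diagonal
matrix) iff their normalized cyclic products `R(A) = log (C(A) / C̄(A))` agree — so `R`
is injective on equivalence classes; and (3) `R` is surjective onto `ℝ`. -/
theorem cycle_type_normalized_cyclic_product (n : ℕ) [NeZero n] (hn : 3 ≤ n)
    (m : Fin n → ℕ) (hm : ∀ i, 3 ≤ m i) :
    (∀ A, CycleCompatible n m A →
        cycProd n A * cycProdRev n A = ∏ i : Fin n, 4 * Real.cos (Real.pi / (m i : ℝ)) ^ 2) ∧
    (∀ A A', CycleCompatible n m A → CycleCompatible n m A' →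
        ((∃ d : Fin n → ℝ, (∀ i, 0 < d i) ∧
            A' = Matrix.diagonal d * A * Matrix.diagonal fun i => (d i)⁻¹) ↔
          Real.log (cycProd n A / cycProdRev n A)
            = Real.log (cycProd n A' / cycProdRev n A'))) ∧
    (∀ r : ℝ, ∃ A, CycleCompatible n m A ∧
        Real.log (cycProd n A / cycProdRev n A) = r) := by
  refine ⟨fun A hA => myAux.part1 n m A hA, ?_, myAux.part3 n hn m hm⟩
  intro A A' hA hA'
  constructor
  · rintro ⟨d, hd, hEq⟩
    obtain ⟨h1, h2⟩ := myAux.forward n A A' d hd hEq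
    rw [h1, h2]
  · exact myAux.part2back n hn m hm A A' hA hA'
end
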